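/- arXiv:2401.06364 — 5 statements merged into one kernel-verified Lean document; each statement's English description precedes it below -/
import Mathlib

section
/- Let n ≥ 2 and let f = p/q : ℂⁿ ⇢ ℂᴺ be a rational map of degree m (in lowest terms, deg p = m, q(0) ≠ 0 after normalization) that maps m + 1 distinct zero-centered spheres into zero-centered spheres. Then q is constant, i.e., f is a polynomial map, and f maps every zero-centered sphere into a zero-centered sphere. -/
open MvPolynomial Metric

noncomputable def evalPoly {n N : ℕ} (P : Fin N → MvPolynomial (Fin n) ℂ)
    (z : EuclideanSpace ℂ (Fin n)) : EuclideanSpace ℂ (Fin N) :=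
  WithLp.toLp 2 (fun i => MvPolynomial.eval (fun j => z j) (P i))

noncomputable def ratMap {n N : ℕ} (P : Fin N → MvPolynomial (Fin n) ℂ)
    (q : MvPolynomial (Fin n) ℂ) (z : EuclideanSpace ℂ (Fin n)) :
    EuclideanSpace ℂ (Fin N) :=
  (MvPolynomial.eval (fun j => z j) q)⁻¹ • evalPoly P z

namespace SphereHelpers

open Polynomial Finset
noncomputable section


lemma poly_zero {m : ℕ} (g : Polynomial ℂ) (hg : g.natDegree ≤ m) (x : Fin (m+1) → ℂ)
    (hx : Function.Injective x) (hr : ∀ j, g.eval (x j) = 0) : g = 0 :=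
  Polynomial.eq_zero_of_natDegree_lt_card_of_eval_eq_zero g hx hr
    (by simpa using Nat.lt_succ_of_le hg)

lemma circle_infinite {r : ℝ} (hr : 0 < r) : {l : ℂ | ‖l‖ = r}.Infinite := by
  have hIoo : (Set.Ioo (0:ℝ) 1).Infinite := Set.Ioo_infinite (by norm_num)
  have hinj : Set.InjOn (fun θ : ℝ => (r : ℂ) * Complex.exp (θ * Complex.I)) (Set.Ioo 0 1) := by
    intro a ha b hb hab
    simp only at hab
    have hr0 : ((r:ℝ) : ℂ) ≠ 0 := Complex.ofReal_ne_zero.mpr hr.ne'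
    have hexp : Complex.exp (a * Complex.I) = Complex.exp (b * Complex.I) :=
      mul_left_cancel₀ hr0 hab
    rw [Complex.exp_eq_exp_iff_exists_int] at hexp
    obtain ⟨k, hk⟩ := hexp
    have him := congrArg Complex.im hk
    simp [Complex.add_im, Complex.mul_im, Complex.mul_re] at him
    -- him : a = b + k * (2 * π)  (in some form)
    have hπ := Real.pi_gt_three
    have hk0 : k = 0 := by
      rcases lt_trichotomy (k:ℝ) 0 with h | h | h
      · have hkz : k < 0 := by exact_mod_cast h
        have hk' : k ≤ -1 := by omega
        have : (k:ℝ) ≤ -1 := by exact_mod_cast hk'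
        nlinarith [ha.1, ha.2, hb.1, hb.2]
      · exact_mod_cast h
      · have hkz : 0 < k := by exact_mod_cast h
        have hk' : 1 ≤ k := by omega
        have : (1:ℝ) ≤ k := by exact_mod_cast hk'
        nlinarith [ha.1, ha.2, hb.1, hb.2]
    rw [hk0] at him
    simpa using him
  apply Set.Infinite.mono _ (hIoo.image hinj)
  rintro _ ⟨θ, _, rfl⟩
  simp [Complex.norm_exp_ofReal_mul_I, abs_of_pos hr]


/-- generic "wrapped" polynomial encoding a Hermitian form on the circle `l * conj l = y`. -/
def Tgen (m : ℕ) (F : ℕ → ℕ → ℂ) (y : ℂ) : Polynomial ℂ :=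
  ∑ k ∈ Finset.range (m+1), ∑ t ∈ Finset.range (m+1),
    Polynomial.C (F k t * y^t) * Polynomial.X ^ (m + k - t)

def Agen (m : ℕ) (F : ℕ → ℕ → ℂ) (d : ℕ) : Polynomial ℂ :=
  ∑ t ∈ Finset.range (m+1), Polynomial.C (F (t+d) t) * Polynomial.X ^ t

lemma Agen_eval (m : ℕ) (F : ℕ → ℕ → ℂ) (d : ℕ) (ξ : ℂ) :
    (Agen m F d).eval ξ = ∑ t ∈ Finset.range (m+1), F (t+d) t * ξ^t := by
  rw [Agen, Polynomial.eval_finset_sum]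
  exact Finset.sum_congr rfl fun t _ => by simp

lemma Agen_natDegree_le (m : ℕ) (F : ℕ → ℕ → ℂ) (d e : ℕ)
    (hF : ∀ k t, e < k → F k t = 0) : (Agen m F d).natDegree ≤ e - d := by
  apply Polynomial.natDegree_sum_le_of_forall_le
  intro t _
  by_cases h : t + d ≤ e
  · refine (Polynomial.natDegree_C_mul_le _ _).trans ?_
    rw [Polynomial.natDegree_X_pow]
    omega
  · rw [hF _ _ (by omega), map_zero, zero_mul]
    simp

lemma Tgen_eval (m : ℕ) (F : ℕ → ℕ → ℂ) (y l : ℂ)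
    (hl : l * (starRingEnd ℂ) l = y) :
    (Tgen m F y).eval l = l^m * ∑ k ∈ Finset.range (m+1), ∑ t ∈ Finset.range (m+1),
      F k t * (l^k * ((starRingEnd ℂ) l)^t) := by
  rw [Tgen, Polynomial.eval_finset_sum, Finset.mul_sum]
  apply Finset.sum_congr rfl
  intro k _
  rw [Polynomial.eval_finset_sum, Finset.mul_sum]
  apply Finset.sum_congr rfl
  intro t ht
  have htm : t ≤ m := Nat.lt_succ_iff.mp (Finset.mem_range.mp ht)
  rw [Polynomial.eval_mul, Polynomial.eval_C, Polynomial.eval_pow, Polynomial.eval_X]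
  have hmkt : m + k - t = (m - t) + k := by omega
  have hsplit : l ^ (m - t) * l ^ t = l ^ m := pow_sub_mul_pow l htm
  calc F k t * y^t * l^(m + k - t)
      = F k t * (l * (starRingEnd ℂ) l)^t * l^((m-t) + k) := by rw [hl, hmkt]
    _ = (l^(m-t) * l^t) * (F k t * (l^k * ((starRingEnd ℂ) l)^t)) := by
        rw [mul_pow, pow_add]; ring
    _ = l^m * (F k t * (l^k * ((starRingEnd ℂ) l)^t)) := by rw [hsplit]

lemma Tgen_coeff_hi (m : ℕ) (F : ℕ → ℕ → ℂ) (y : ℂ) (d : ℕ)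
    (hF : ∀ k t, m < k → F k t = 0) :
    (Tgen m F y).coeff (m + d) = ∑ t ∈ Finset.range (m+1), F (t+d) t * y^t := by
  rw [Tgen, Polynomial.finset_sum_coeff]
  rw [Finset.sum_congr rfl fun k (_ : k ∈ Finset.range (m+1)) =>
    Polynomial.finset_sum_coeff _ _ _]
  rw [Finset.sum_comm]
  apply Finset.sum_congr rfl
  intro t ht
  have htm : t ≤ m := Nat.lt_succ_iff.mp (Finset.mem_range.mp ht)
  rw [Finset.sum_eq_single (t + d)]
  · rw [Polynomial.coeff_C_mul, Polynomial.coeff_X_pow, if_pos (by omega), mul_one]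
  · intro k hk hne
    rw [Polynomial.coeff_C_mul, Polynomial.coeff_X_pow, if_neg, mul_zero]
    intro h
    have hkm : k ≤ m := Nat.lt_succ_iff.mp (Finset.mem_range.mp hk)
    omega
  · intro hnot
    have : m < t + d := by
      by_contra h
      exact hnot (Finset.mem_range.mpr (by omega))
    rw [hF _ _ this, zero_mul, map_zero, zero_mul, Polynomial.coeff_zero]

lemma Tgen_coeff_lo (m : ℕ) (F : ℕ → ℕ → ℂ) (y : ℂ) (e : ℕ) (he : e < m)
    (hF' : ∀ k t, m < t → F k t = 0) :
    (Tgen m F y).coeff e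
      = ∑ k ∈ Finset.range (m+1), F k (k + (m - e)) * y^(k + (m - e)) := by
  rw [Tgen, Polynomial.finset_sum_coeff]
  rw [Finset.sum_congr rfl fun k (_ : k ∈ Finset.range (m+1)) =>
    Polynomial.finset_sum_coeff _ _ _]
  apply Finset.sum_congr rfl
  intro k hk
  have hkm : k ≤ m := Nat.lt_succ_iff.mp (Finset.mem_range.mp hk)
  rw [Finset.sum_eq_single (k + (m - e))]
  · rw [Polynomial.coeff_C_mul, Polynomial.coeff_X_pow, if_pos (by omega), mul_one]
  · intro t ht hne
    rw [Polynomial.coeff_C_mul, Polynomial.coeff_X_pow, if_neg, mul_zero]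
    intro h
    have htm : t ≤ m := Nat.lt_succ_iff.mp (Finset.mem_range.mp ht)
    omega
  · intro hnot
    have : m < k + (m - e) := by
      by_contra h
      exact hnot (Finset.mem_range.mpr (by omega))
    rw [hF' _ _ this, zero_mul, map_zero, zero_mul, Polynomial.coeff_zero]

lemma core {N m : ℕ} (af : Fin N → Polynomial ℂ) (bf : Polynomial ℂ)
    (hadeg : ∀ i, (af i).natDegree ≤ m) (hbdeg : bf.natDegree ≤ m)
    (hb0 : bf.coeff 0 ≠ 0)
    (r R : Fin (m+1) → ℝ) (hrpos : ∀ j, 0 < r j)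
    (hxinj : Function.Injective fun j => ((r j : ℂ)^2))
    (hcirc : ∀ (j : Fin (m+1)) (l : ℂ), ‖l‖ = r j →
      ∑ i, (af i).eval l * (starRingEnd ℂ) ((af i).eval l)
        = ((R j : ℂ))^2 * (bf.eval l * (starRingEnd ℂ) (bf.eval l))) :
    ∃ ρ : Polynomial ℂ, ρ.natDegree ≤ m ∧
      (∀ j, ρ.eval ((r j : ℂ)^2) = ((R j : ℂ))^2) ∧
      ∀ s : ℝ, ∑ i, (af i).eval (s:ℂ) * (starRingEnd ℂ) ((af i).eval (s:ℂ))
        = ρ.eval ((s:ℂ)^2) * (bf.eval (s:ℂ) * (starRingEnd ℂ) (bf.eval (s:ℂ))) := by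
  classical
  set M : ℕ → ℕ → ℂ := fun k t => ∑ i, (af i).coeff k * (starRingEnd ℂ) ((af i).coeff t)
    with hMdef
  set Mb : ℕ → ℕ → ℂ := fun k t => bf.coeff k * (starRingEnd ℂ) (bf.coeff t) with hMbdef
  have hM0 : ∀ k t, m < k → M k t = 0 := by
    intro k t hk
    apply Finset.sum_eq_zero; intro i _
    rw [Polynomial.coeff_eq_zero_of_natDegree_lt (lt_of_le_of_lt (hadeg i) hk), zero_mul]
  have hM0' : ∀ k t, m < t → M k t = 0 := by
    intro k t ht
    apply Finset.sum_eq_zero; intro i _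
    rw [Polynomial.coeff_eq_zero_of_natDegree_lt (lt_of_le_of_lt (hadeg i) ht), map_zero,
      mul_zero]
  have hMb0 : ∀ k t, bf.natDegree < k → Mb k t = 0 := by
    intro k t hk
    show bf.coeff k * _ = 0
    rw [Polynomial.coeff_eq_zero_of_natDegree_lt hk, zero_mul]
  have hMb0' : ∀ k t, bf.natDegree < t → Mb k t = 0 := by
    intro k t ht
    show bf.coeff k * _ = 0
    rw [Polynomial.coeff_eq_zero_of_natDegree_lt ht, map_zero, mul_zero]
  have hMherm : ∀ k t, (starRingEnd ℂ) (M k t) = M t k := by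
    intro k t
    rw [hMdef, map_sum]
    apply Finset.sum_congr rfl; intro i _
    rw [map_mul, Complex.conj_conj]; ring
  have hMbherm : ∀ k t, (starRingEnd ℂ) (Mb k t) = Mb t k := by
    intro k t
    show (starRingEnd ℂ) (bf.coeff k * _) = bf.coeff t * _
    rw [map_mul, Complex.conj_conj]; ring
  have expand : ∀ (u : Polynomial ℂ), u.natDegree ≤ m → ∀ l : ℂ,
      u.eval l * (starRingEnd ℂ) (u.eval l)
        = ∑ k ∈ Finset.range (m+1), ∑ t ∈ Finset.range (m+1),
            (u.coeff k * (starRingEnd ℂ) (u.coeff t)) * (l^k * ((starRingEnd ℂ) l)^t) := by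
    intro u hu l
    rw [Polynomial.eval_eq_sum_range' (Nat.lt_succ_of_le hu), map_sum, Finset.sum_mul_sum]
    apply Finset.sum_congr rfl; intro k _
    apply Finset.sum_congr rfl; intro t _
    rw [map_mul, map_pow]
    ring
  have hE : ∀ l : ℂ, ∑ i, (af i).eval l * (starRingEnd ℂ) ((af i).eval l)
      = ∑ k ∈ Finset.range (m+1), ∑ t ∈ Finset.range (m+1),
          M k t * (l^k * ((starRingEnd ℂ) l)^t) := by
    intro l
    rw [Finset.sum_congr rfl fun i (_ : i ∈ Finset.univ) => expand (af i) (hadeg i) l]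
    rw [Finset.sum_comm]
    apply Finset.sum_congr rfl; intro k _
    rw [Finset.sum_comm]
    apply Finset.sum_congr rfl; intro t _
    rw [hMdef, Finset.sum_mul]
  -- the combined coefficient function
  set G : ℂ → ℕ → ℕ → ℂ := fun w k t => M k t - w * Mb k t with hGdef
  have hG0 : ∀ w k t, m < k → G w k t = 0 := by
    intro w k t hk
    rw [hGdef]
    show M k t - w * Mb k t = 0
    rw [hM0 _ _ hk, hMb0 _ _ (lt_of_le_of_lt hbdeg hk), mul_zero, sub_zero]
  have hG0' : ∀ w k t, m < t → G w k t = 0 := by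
    intro w k t ht
    show M k t - w * Mb k t = 0
    rw [hM0' _ _ ht, hMb0' _ _ (lt_of_le_of_lt hbdeg ht), mul_zero, sub_zero]
  -- evaluation of Tgen on circles
  have hTeval : ∀ (w y l : ℂ), l * (starRingEnd ℂ) l = y →
      (Tgen m (G w) y).eval l
        = l^m * ((∑ i, (af i).eval l * (starRingEnd ℂ) ((af i).eval l))
            - w * (bf.eval l * (starRingEnd ℂ) (bf.eval l))) := by
    intro w y l hy
    rw [Tgen_eval m (G w) y l hy, hE l, expand bf hbdeg l]
    congr 1
    rw [Finset.mul_sum, ← Finset.sum_sub_distrib]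
    apply Finset.sum_congr rfl; intro k _
    rw [Finset.mul_sum, ← Finset.sum_sub_distrib]
    apply Finset.sum_congr rfl; intro t _
    show (M k t - w * Mb k t) * _ = _
    rw [hMbdef]
    ring
  -- key interpolation identities
  have hkey : ∀ (j : Fin (m+1)) (d : ℕ),
      (Agen m M d).eval ((r j : ℂ)^2) = ((R j : ℂ))^2 * (Agen m Mb d).eval ((r j : ℂ)^2) := by
    intro j d
    have hT0 : Tgen m (G ((R j : ℂ)^2)) ((r j : ℂ)^2) = 0 := by
      apply Polynomial.eq_zero_of_infinite_isRoot
      apply Set.Infinite.mono _ (circle_infinite (hrpos j))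
      intro l hl
      simp only [Set.mem_setOf_eq] at hl ⊢
      have hy : l * (starRingEnd ℂ) l = (r j : ℂ)^2 := by
        rw [Complex.mul_conj, Complex.normSq_eq_norm_sq, hl]
        push_cast; ring
      show (Tgen m (G ((R j : ℂ)^2)) ((r j : ℂ)^2)).IsRoot l
      rw [Polynomial.IsRoot.def, hTeval _ _ l hy, hcirc j l hl, sub_self, mul_zero]
    have h1 := congrArg (fun p => Polynomial.coeff p (m + d)) hT0
    simp only [Polynomial.coeff_zero] at h1
    rw [Tgen_coeff_hi m _ _ d (hG0 _)] at h1
    have h2 : (∑ t ∈ Finset.range (m+1), M (t+d) t * ((r j : ℂ)^2)^t)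
        - ((R j : ℂ))^2 * ∑ t ∈ Finset.range (m+1), Mb (t+d) t * ((r j : ℂ)^2)^t = 0 := by
      rw [Finset.mul_sum, ← Finset.sum_sub_distrib, ← h1]
      apply Finset.sum_congr rfl; intro t _
      show M (t+d) t * _ - _ = (M (t+d) t - _ * Mb (t+d) t) * _
      ring
    rw [Agen_eval, Agen_eval, ← sub_eq_zero]
    exact h2
  -- definition of the interpolating polynomial
  have hbfne : bf ≠ 0 := fun h => hb0 (by simp [h])
  set D := bf.natDegree with hDdef
  have hDcoeff : bf.coeff D ≠ 0 := Polynomial.leadingCoeff_ne_zero.mpr hbfne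
  clear_value D
  have hBD : Agen m Mb D = Polynomial.C (Mb D 0) := by
    rw [Agen, Finset.sum_eq_single 0]
    · rw [pow_zero, mul_one, Nat.zero_add]
    · intro t ht hne
      rw [hMb0 _ _ (by omega), map_zero, zero_mul]
    · intro h
      exact absurd (Finset.mem_range.mpr (by omega)) h
  have hMbD : Mb D 0 ≠ 0 := by
    apply mul_ne_zero
    · exact hDcoeff
    · rw [show (starRingEnd ℂ) (bf.coeff 0) = star (bf.coeff 0) from rfl]
      exact star_ne_zero.mpr hb0
  set ρ : Polynomial ℂ := Polynomial.C ((Mb D 0)⁻¹) * Agen m M D with hρdef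
  have hADdeg : (Agen m M D).natDegree ≤ m - D := Agen_natDegree_le m M D m hM0
  have hρdeg : ρ.natDegree ≤ m :=
    (Polynomial.natDegree_C_mul_le _ _).trans (hADdeg.trans (by omega))
  have hρdegD : ρ.natDegree ≤ m - D := (Polynomial.natDegree_C_mul_le _ _).trans hADdeg
  have hρeval : ∀ j, ρ.eval ((r j : ℂ)^2) = ((R j : ℂ))^2 := by
    intro j
    rw [hρdef, Polynomial.eval_mul, Polynomial.eval_C, hkey j D, hBD, Polynomial.eval_C]
    field_simp
  have hAB : ∀ d, Agen m M d = ρ * Agen m Mb d := by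
    intro d
    have hsub : Agen m M d - ρ * Agen m Mb d = 0 := by
      refine poly_zero _ ?_ (fun j => ((r j : ℂ)^2)) hxinj ?_
      · refine (Polynomial.natDegree_sub_le _ _).trans (max_le ?_ ?_)
        · exact (Agen_natDegree_le m M d m hM0).trans (by omega)
        · refine Polynomial.natDegree_mul_le.trans ?_
          refine (add_le_add hρdegD (Agen_natDegree_le m Mb d D hMb0)).trans ?_
          omega
      · intro j
        rw [Polynomial.eval_sub, Polynomial.eval_mul, hρeval j, hkey j d, sub_self]
    rw [← sub_eq_zero]
    exact hsub
  have hconj_eval : ∀ (g : Polynomial ℂ) (ξ : ℂ),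
      (g.map (starRingEnd ℂ)).eval ((starRingEnd ℂ) ξ) = (starRingEnd ℂ) (g.eval ξ) := by
    intro g ξ
    rw [Polynomial.eval_map, Polynomial.eval₂_at_apply]
  have hmapρ : ρ.map (starRingEnd ℂ) = ρ := by
    have hsub : ρ.map (starRingEnd ℂ) - ρ = 0 := by
      refine poly_zero _ ?_ (fun j => ((r j : ℂ)^2)) hxinj ?_
      · refine (Polynomial.natDegree_sub_le _ _).trans (max_le ?_ hρdeg)
        exact Polynomial.natDegree_map_le.trans hρdeg
      · intro j
        have hxreal : (starRingEnd ℂ) ((r j : ℂ)^2) = ((r j : ℂ)^2) := by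
          rw [map_pow, Complex.conj_ofReal]
        have h1 : (Polynomial.map (starRingEnd ℂ) ρ).eval ((r j : ℂ)^2)
            = (starRingEnd ℂ) (ρ.eval ((r j : ℂ)^2)) := by
          conv_lhs => rw [show ((r j : ℂ)^2) = (starRingEnd ℂ) ((r j : ℂ)^2) from hxreal.symm]
          rw [hconj_eval]
        show (Polynomial.map (starRingEnd ℂ) ρ - ρ).eval ((r j : ℂ)^2) = 0
        rw [Polynomial.eval_sub, h1, hρeval j, map_pow, Complex.conj_ofReal, sub_self]
    rw [← sub_eq_zero]
    exact hsub
  have hρreal : ∀ ξ : ℂ, (starRingEnd ℂ) ξ = ξ → (starRingEnd ℂ) (ρ.eval ξ) = ρ.eval ξ := by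
    intro ξ hξ
    conv_lhs => rw [← hconj_eval ρ ξ]
    rw [hmapρ, hξ]
  refine ⟨ρ, hρdeg, hρeval, ?_⟩
  intro s
  have hξc : (starRingEnd ℂ) ((s:ℂ)^2) = (s:ℂ)^2 := by rw [map_pow, Complex.conj_ofReal]
  have hρc : (starRingEnd ℂ) (ρ.eval ((s:ℂ)^2)) = ρ.eval ((s:ℂ)^2) := hρreal _ hξc
  by_cases hs : (s:ℂ) = 0
  · -- the case s = 0
    have h0 := congrArg (fun p => Polynomial.eval (0:ℂ) p) (hAB 0)
    simp only [Polynomial.eval_mul] at h0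
    rw [Agen_eval, Agen_eval] at h0
    have hcol : ∀ W : ℕ → ℕ → ℂ, ∑ t ∈ Finset.range (m+1), W (t+0) t * ((0:ℂ))^t = W 0 0 := by
      intro W
      rw [Finset.sum_eq_single 0]
      · simp
      · intro t ht hne
        rw [zero_pow hne, mul_zero]
      · intro h
        exact absurd (Finset.mem_range.mpr (by omega)) h
    rw [hcol M, hcol Mb] at h0
    have hev0 : ∀ (u : Polynomial ℂ), u.eval ((s:ℂ)) = u.coeff 0 := by
      intro u
      rw [hs, ← Polynomial.coeff_zero_eq_eval_zero]
    have hsq : ((s:ℂ))^2 = 0 := by rw [hs]; ring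
    rw [hsq]
    calc ∑ i, (af i).eval (s:ℂ) * (starRingEnd ℂ) ((af i).eval (s:ℂ))
        = ∑ i, (af i).coeff 0 * (starRingEnd ℂ) ((af i).coeff 0) := by
          apply Finset.sum_congr rfl; intro i _; rw [hev0]
      _ = M 0 0 := rfl
      _ = ρ.eval 0 * Mb 0 0 := h0
      _ = ρ.eval 0 * (bf.eval (s:ℂ) * (starRingEnd ℂ) (bf.eval (s:ℂ))) := by
          rw [hev0 bf]
  · -- the case s ≠ 0
    have hT0 : Tgen m (G (ρ.eval ((s:ℂ)^2))) ((s:ℂ)^2) = 0 := by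
      apply Polynomial.ext
      intro e
      rw [Polynomial.coeff_zero]
      rcases le_or_gt m e with he | he
      · obtain ⟨d, rfl⟩ : ∃ d, e = m + d := ⟨e - m, by omega⟩
        rw [Tgen_coeff_hi m _ _ d (hG0 _)]
        have hsum : ∑ t ∈ Finset.range (m+1), G (ρ.eval ((s:ℂ)^2)) (t+d) t * ((s:ℂ)^2)^t
            = (Agen m M d).eval ((s:ℂ)^2)
              - ρ.eval ((s:ℂ)^2) * (Agen m Mb d).eval ((s:ℂ)^2) := by
          rw [Agen_eval, Agen_eval, Finset.mul_sum, ← Finset.sum_sub_distrib]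
          apply Finset.sum_congr rfl; intro t _
          show (M (t+d) t - _ * Mb (t+d) t) * _ = _
          ring
        rw [hsum, hAB d, Polynomial.eval_mul, sub_self]
      · rw [Tgen_coeff_lo m _ _ e he (hG0' _)]
        set d := m - e with hd
        have hconjsum : ∑ k ∈ Finset.range (m+1),
            G (ρ.eval ((s:ℂ)^2)) k (k + d) * ((s:ℂ)^2)^(k + d)
            = (starRingEnd ℂ) (∑ k ∈ Finset.range (m+1),
                G (ρ.eval ((s:ℂ)^2)) (k + d) k * ((s:ℂ)^2)^(k + d)) := by
          rw [map_sum]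
          apply Finset.sum_congr rfl; intro k _
          rw [map_mul, map_pow, hξc]
          congr 1
          show M k (k+d) - _ * Mb k (k+d) = (starRingEnd ℂ) (M (k+d) k - _ * Mb (k+d) k)
          rw [map_sub, map_mul, hMherm, hMbherm, hρc]
        rw [hconjsum]
        have hzero : ∑ k ∈ Finset.range (m+1),
            G (ρ.eval ((s:ℂ)^2)) (k + d) k * ((s:ℂ)^2)^(k + d)
            = ((s:ℂ)^2)^d * ((Agen m M d).eval ((s:ℂ)^2)
                - ρ.eval ((s:ℂ)^2) * (Agen m Mb d).eval ((s:ℂ)^2)) := by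
          rw [Agen_eval, Agen_eval, Finset.mul_sum, mul_sub, Finset.mul_sum, Finset.mul_sum,
            ← Finset.sum_sub_distrib]
          apply Finset.sum_congr rfl; intro k _
          show (M (k+d) k - _ * Mb (k+d) k) * _ = _
          rw [pow_add]
          ring
        rw [hzero, hAB d, Polynomial.eval_mul, sub_self, mul_zero, map_zero]
    have hev := congrArg (fun p => Polynomial.eval ((s:ℂ)) p) hT0
    simp only [Polynomial.eval_zero] at hev
    have hy : (s:ℂ) * (starRingEnd ℂ) (s:ℂ) = (s:ℂ)^2 := by
      rw [Complex.conj_ofReal]; ring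
    rw [hTeval _ _ _ hy] at hev
    rcases mul_eq_zero.mp hev with h | h
    · exact absurd h (pow_ne_zero _ hs)
    · rw [sub_eq_zero] at h
      exact h

lemma mv_isUnit_eq_C : ∀ {n : ℕ} (p : MvPolynomial (Fin n) ℂ), IsUnit p →
    ∃ c : ℂ, p = MvPolynomial.C c := by
  intro n
  induction n with
  | zero => intro p _; exact ⟨p.coeff 0, MvPolynomial.eq_C_of_isEmpty p⟩
  | succ n ih =>
    intro p hp
    set φ := MvPolynomial.finSuccEquiv ℂ n with hφ
    have hu : IsUnit (φ p) := hp.map φ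
    have hdeg : (φ p).degree = 0 := degree_eq_zero_of_isUnit hu
    have hC : φ p = Polynomial.C ((φ p).coeff 0) := eq_C_of_degree_le_zero hdeg.le
    have hu2 : IsUnit ((φ p).coeff 0) := by
      rw [hC, Polynomial.isUnit_C] at hu; exact hu
    obtain ⟨c, hc⟩ := ih _ hu2
    refine ⟨c, ?_⟩
    have := congrArg (φ.symm) hC
    rw [AlgEquiv.symm_apply_apply] at this
    rw [this, hc]
    exact RingHom.congr_fun (MvPolynomial.finSuccEquiv_comp_C_eq_C (R := ℂ) n) c

variable {n : ℕ}

def lineSub (z : Fin n → ℂ) : MvPolynomial (Fin n) ℂ →ₐ[ℂ] Polynomial ℂ :=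
  MvPolynomial.aeval (fun j => Polynomial.C (z j) * Polynomial.X)

lemma lineSub_eval (z : Fin n → ℂ) (f : MvPolynomial (Fin n) ℂ) (l : ℂ) :
    (lineSub z f).eval l = MvPolynomial.eval (fun j => l * z j) f := by
  induction f using MvPolynomial.induction_on with
  | C a => simp [lineSub]
  | add p q hp hq => simp [map_add, hp, hq]
  | mul_X p j hp =>
    rw [map_mul, Polynomial.eval_mul, hp]
    have hX : (lineSub z) (MvPolynomial.X j) = Polynomial.C (z j) * Polynomial.X := by
      simp [lineSub]
    rw [hX]
    simp only [Polynomial.eval_mul, Polynomial.eval_C, Polynomial.eval_X, map_mul,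
      MvPolynomial.eval_X]
    ring

lemma lineSub_natDegree_le (z : Fin n → ℂ) (f : MvPolynomial (Fin n) ℂ) :
    (lineSub z f).natDegree ≤ f.totalDegree := by
  conv_lhs => rw [f.as_sum, map_sum]
  apply Polynomial.natDegree_sum_le_of_forall_le
  intro α hα
  rw [lineSub, MvPolynomial.aeval_monomial]
  refine Polynomial.natDegree_mul_le.trans ?_
  have h1 : (algebraMap ℂ (Polynomial ℂ) (MvPolynomial.coeff α f)).natDegree = 0 := by
    simp [Polynomial.algebraMap_eq]
  rw [h1, zero_add]
  refine le_trans ?_ (MvPolynomial.le_totalDegree hα)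
  rw [Finsupp.prod]
  refine (Polynomial.natDegree_prod_le _ _).trans ?_
  rw [Finsupp.sum]
  apply Finset.sum_le_sum
  intro j _
  refine Polynomial.natDegree_pow_le.trans ?_
  have h2 : (Polynomial.C (z j) * Polynomial.X).natDegree ≤ 1 :=
    (Polynomial.natDegree_C_mul_le _ _).trans (by simp)
  calc α j * (Polynomial.C (z j) * Polynomial.X).natDegree ≤ α j * 1 :=
        Nat.mul_le_mul_left _ h2
    _ = α j := mul_one _

lemma lineSub_coeff_zero (z : Fin n → ℂ) (f : MvPolynomial (Fin n) ℂ) :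
    (lineSub z f).coeff 0 = MvPolynomial.eval (fun _ => (0:ℂ)) f := by
  rw [Polynomial.coeff_zero_eq_eval_zero, lineSub_eval]
  simp only [zero_mul]

/-- squared norm of the evaluated polynomial tuple, in complex form -/
lemma sum_mul_conj_eq {n N : ℕ} (P : Fin N → MvPolynomial (Fin n) ℂ)
    (w : EuclideanSpace ℂ (Fin n)) :
    ∑ i, (MvPolynomial.eval (fun j => w j) (P i))
        * (starRingEnd ℂ) (MvPolynomial.eval (fun j => w j) (P i))
      = ((‖evalPoly P w‖^2 : ℝ) : ℂ) := by
  rw [EuclideanSpace.norm_eq, Real.sq_sqrt (Finset.sum_nonneg fun i _ => sq_nonneg _)]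
  rw [Complex.ofReal_sum]
  apply Finset.sum_congr rfl
  intro i _
  have : evalPoly P w i = MvPolynomial.eval (fun j => w j) (P i) := rfl
  rw [this, Complex.mul_conj, Complex.normSq_eq_norm_sq]

lemma mul_conj_eq (v : ℂ) : v * (starRingEnd ℂ) v = ((‖v‖^2 : ℝ) : ℂ) := by
  rw [Complex.mul_conj, Complex.normSq_eq_norm_sq]

end
end SphereHelpers

open SphereHelpers Polynomial in

/-- a rational map of degree `m` (in lowest terms, with
`q(0) ≠ 0`) taking `m + 1` distinct zero-centered spheres to zero-centered
spheres has constant denominator, i.e., is a polynomial map, and takes every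
zero-centered sphere to a zero-centered sphere. -/
theorem rational_m_plus_one_fold_is_polynomial {n N m : ℕ} (hn : 2 ≤ n)
    (P : Fin N → MvPolynomial (Fin n) ℂ) (q : MvPolynomial (Fin n) ℂ)
    (hdegp : Finset.univ.sup (fun i => (P i).totalDegree) ≤ m)
    (hdegq : q.totalDegree ≤ m)
    (hq0 : MvPolynomial.eval (fun _ : Fin n => (0 : ℂ)) q ≠ 0)
    (hlowest : ∀ d : MvPolynomial (Fin n) ℂ, d ∣ q → (∀ i, d ∣ P i) → IsUnit d)
    (r R : Fin (m + 1) → ℝ)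
    (hrpos : ∀ j, 0 < r j) (hRpos : ∀ j, 0 < R j)
    (hrmono : StrictMono r)
    (hqpole : ∀ (j : Fin (m + 1)) (z : EuclideanSpace ℂ (Fin n)), ‖z‖ = r j →
      MvPolynomial.eval (fun i => z i) q ≠ 0)
    (hsphere : ∀ (j : Fin (m + 1)) (z : EuclideanSpace ℂ (Fin n)), ‖z‖ = r j →
      ‖ratMap P q z‖ = R j) :
    (∃ c : ℂ, c ≠ 0 ∧ q = MvPolynomial.C c) ∧
    ∀ s : ℝ, 0 < s → ∃ Rs : ℝ,
      ∀ z : EuclideanSpace ℂ (Fin n), ‖z‖ = s → ‖ratMap P q z‖ = Rs := by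
  classical
  have hxinj : Function.Injective fun j : Fin (m+1) => ((r j : ℂ)^2) := by
    intro j j' h
    simp only at h
    have h2 : ((r j : ℝ))^2 = ((r j' : ℝ))^2 := by exact_mod_cast h
    have h3 : r j = r j' := by nlinarith [hrpos j, hrpos j']
    exact hrmono.injective h3
  -- the per-direction identity
  have hdir : ∀ z : EuclideanSpace ℂ (Fin n), ‖z‖ = 1 →
      ∃ ρ : Polynomial ℂ, ρ.natDegree ≤ m ∧
        (∀ j, ρ.eval ((r j : ℂ)^2) = ((R j : ℂ))^2) ∧
        ∀ s : ℝ,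
          ∑ i, (MvPolynomial.eval (fun j => (s:ℂ) * z j) (P i))
              * (starRingEnd ℂ) (MvPolynomial.eval (fun j => (s:ℂ) * z j) (P i))
            = ρ.eval ((s:ℂ)^2) * ((MvPolynomial.eval (fun j => (s:ℂ) * z j) q)
                * (starRingEnd ℂ) (MvPolynomial.eval (fun j => (s:ℂ) * z j) q)) := by
    intro z hz
    have hcirc : ∀ (j : Fin (m+1)) (l : ℂ), ‖l‖ = r j →
        ∑ i, (lineSub (fun j => z j) (P i)).eval l
            * (starRingEnd ℂ) ((lineSub (fun j => z j) (P i)).eval l)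
          = ((R j : ℂ))^2 * ((lineSub (fun j => z j) q).eval l
              * (starRingEnd ℂ) ((lineSub (fun j => z j) q).eval l)) := by
      intro j l hl
      set w : EuclideanSpace ℂ (Fin n) := l • z with hwdef
      have hwj : (fun j' => l * z j') = (fun j' => w j') := by
        funext j'
        rw [hwdef]
        simp [PiLp.smul_apply, smul_eq_mul]
      have hwnorm : ‖w‖ = r j := by
        rw [hwdef, norm_smul, hz, mul_one, hl]
      have hqw := hqpole j w hwnorm
      have hsph := hsphere j w hwnorm
      rw [ratMap, norm_smul, norm_inv] at hsph
      have hqnorm : ‖MvPolynomial.eval (fun i => w i) q‖ ≠ 0 :=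
        norm_ne_zero_iff.mpr hqw
      have h5 : ‖evalPoly P w‖ = R j * ‖MvPolynomial.eval (fun i => w i) q‖ := by
        have habs : ‖((MvPolynomial.eval fun j => w j) q)‖ ≠ 0 := by
          simpa using hqnorm
        field_simp at hsph
        rw [mul_comm]
        exact hsph
      have hsq : ‖evalPoly P w‖^2
          = (R j)^2 * ‖MvPolynomial.eval (fun i => w i) q‖^2 := by
        rw [h5]; ring
      calc ∑ i, (lineSub (fun j => z j) (P i)).eval l
            * (starRingEnd ℂ) ((lineSub (fun j => z j) (P i)).eval l)
          = ∑ i, (MvPolynomial.eval (fun j' => w j') (P i))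
              * (starRingEnd ℂ) (MvPolynomial.eval (fun j' => w j') (P i)) := by
            apply Finset.sum_congr rfl; intro i _
            rw [lineSub_eval, hwj]
        _ = ((‖evalPoly P w‖^2 : ℝ) : ℂ) := sum_mul_conj_eq P w
        _ = ((R j : ℂ))^2 * ((‖MvPolynomial.eval (fun i => w i) q‖^2 : ℝ) : ℂ) := by
            rw [hsq]; push_cast; ring
        _ = ((R j : ℂ))^2 * ((lineSub (fun j => z j) q).eval l
              * (starRingEnd ℂ) ((lineSub (fun j => z j) q).eval l)) := by
            rw [lineSub_eval, hwj, mul_conj_eq]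
    obtain ⟨ρ, h1, h2, h3⟩ := core (fun i => lineSub (fun j => z j) (P i))
      (lineSub (fun j => z j) q)
      (fun i => (lineSub_natDegree_le _ _).trans
        ((Finset.le_sup (Finset.mem_univ i)).trans hdegp))
      ((lineSub_natDegree_le _ _).trans hdegq)
      (by rw [lineSub_coeff_zero]; exact hq0)
      r R hrpos hxinj hcirc
    refine ⟨ρ, h1, h2, fun s => ?_⟩
    have h4 := h3 s
    simpa only [lineSub_eval] using h4
  -- zeros of q are common zeros of the numerators
  have hzero_out : ∀ (x : Fin n → ℂ), MvPolynomial.eval x q = 0 →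
      ∀ i, MvPolynomial.eval x (P i) = 0 := by
    intro x hx i
    have hxne : x ≠ (fun _ => 0) := by
      intro h; rw [h] at hx; exact hq0 hx
    set w : EuclideanSpace ℂ (Fin n) := (EuclideanSpace.equiv (Fin n) ℂ).symm x with hwdef
    have hwx : ∀ j, w j = x j := fun j => rfl
    have hsne : ‖w‖ ≠ 0 := by
      intro h
      apply hxne
      funext j
      have hw0 : w = 0 := norm_eq_zero.mp h
      have : w j = 0 := by rw [hw0]; rfl
      rw [← hwx j, this]
    set z : EuclideanSpace ℂ (Fin n) := (‖w‖⁻¹ : ℝ) • w with hzdef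
    have hz : ‖z‖ = 1 := by
      rw [hzdef, norm_smul, norm_inv, norm_norm, inv_mul_cancel₀ hsne]
    obtain ⟨ρ, _, _, h3⟩ := hdir z hz
    have hs := h3 ‖w‖
    have harg : (fun j => ((‖w‖ : ℝ):ℂ) * z j) = x := by
      funext j
      rw [hzdef]
      show ((‖w‖:ℝ):ℂ) * (((‖w‖⁻¹ : ℝ) • w) j) = x j
      rw [PiLp.smul_apply, Complex.real_smul, ← mul_assoc, ← Complex.ofReal_mul,
        mul_inv_cancel₀ hsne]
      rw [hwx j]
      simp
    rw [harg] at hs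
    rw [hx] at hs
    simp only [map_zero, mul_zero, zero_mul] at hs
    have hs2 : ((∑ i', Complex.normSq (MvPolynomial.eval x (P i')) : ℝ) : ℂ) = 0 := by
      rw [Complex.ofReal_sum, ← hs]
      apply Finset.sum_congr rfl; intro i' _
      rw [Complex.mul_conj]
    have hs3 : ∑ i', Complex.normSq (MvPolynomial.eval x (P i')) = 0 := by
      exact_mod_cast hs2
    have hterm := (Finset.sum_eq_zero_iff_of_nonneg
      (fun i' _ => Complex.normSq_nonneg _)).mp hs3 i (Finset.mem_univ i)
    exact Complex.normSq_eq_zero.mp hterm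
  -- q is a unit
  have hqne : q ≠ 0 := by
    intro h; apply hq0; rw [h]; simp
  have hunit : IsUnit q := by
    by_contra hu
    obtain ⟨d₀, hirr, hdvd⟩ := WfDvdMonoid.exists_irreducible_factor hu hqne
    have hprime : Prime d₀ := UniqueFactorizationMonoid.irreducible_iff_prime.mp hirr
    have hspan : (Ideal.span {d₀}).IsPrime :=
      (Ideal.span_singleton_prime hprime.ne_zero).mpr hprime
    have hdvdP : ∀ i, d₀ ∣ P i := by
      intro i
      rw [← Ideal.mem_span_singleton]
      rw [← hspan.radical, ← MvPolynomial.vanishingIdeal_zeroLocus_eq_radical (K := ℂ),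
        MvPolynomial.mem_vanishingIdeal_iff]
      intro x hx
      have hd0 : MvPolynomial.eval x d₀ = 0 :=
        (MvPolynomial.mem_zeroLocus_iff.mp hx) d₀ (Ideal.subset_span rfl)
      obtain ⟨e, he⟩ := hdvd
      have hqx : MvPolynomial.eval x q = 0 := by rw [he, map_mul, hd0, zero_mul]
      exact hzero_out x hqx i
    exact hirr.not_isUnit (hlowest d₀ hdvd hdvdP)
  obtain ⟨c, hcq⟩ := mv_isUnit_eq_C q hunit
  have hc0 : c ≠ 0 := by
    intro h; apply hq0; rw [hcq, h]; simp
  refine ⟨⟨c, hc0, hcq⟩, ?_⟩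
  -- part (b)
  intro s hs
  have hi0 : (0:ℕ) < n := by omega
  set zc : EuclideanSpace ℂ (Fin n) := EuclideanSpace.single (⟨0, hi0⟩ : Fin n) (1:ℂ)
    with hzc
  have hzcn : ‖zc‖ = 1 := by
    rw [hzc, EuclideanSpace.norm_single, norm_one]
  obtain ⟨ρ, hρdeg, hρev, _⟩ := hdir zc hzcn
  refine ⟨Real.sqrt ((ρ.eval ((s:ℂ)^2)).re), ?_⟩
  intro w hw
  have hsne : ‖w‖ ≠ 0 := by rw [hw]; exact hs.ne'
  set z : EuclideanSpace ℂ (Fin n) := (‖w‖⁻¹ : ℝ) • w with hzdef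
  have hz : ‖z‖ = 1 := by
    rw [hzdef, norm_smul, norm_inv, norm_norm, inv_mul_cancel₀ hsne]
  obtain ⟨ρ', hρ'deg, hρ'ev, h3⟩ := hdir z hz
  have hρρ' : ρ' = ρ := by
    have hsub : ρ' - ρ = 0 := by
      refine poly_zero _ ?_ (fun j => ((r j : ℂ)^2)) hxinj ?_
      · exact (Polynomial.natDegree_sub_le _ _).trans (max_le hρ'deg hρdeg)
      · intro j
        show (ρ' - ρ).eval ((r j : ℂ)^2) = 0
        rw [Polynomial.eval_sub, hρ'ev j, hρev j, sub_self]
    rw [← sub_eq_zero]; exact hsub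
  have hid := h3 ‖w‖
  rw [hρρ'] at hid
  have harg : (fun j => ((‖w‖ : ℝ):ℂ) * z j) = (fun j => w j) := by
    funext j
    rw [hzdef]
    show ((‖w‖:ℝ):ℂ) * (((‖w‖⁻¹ : ℝ) • w) j) = w j
    rw [PiLp.smul_apply, Complex.real_smul, ← mul_assoc, ← Complex.ofReal_mul,
      mul_inv_cancel₀ hsne]
    simp
  rw [harg, hw] at hid
  have hqc : MvPolynomial.eval (fun j => w j) q = c := by rw [hcq]; simp
  rw [hqc, sum_mul_conj_eq P w, mul_conj_eq] at hid
  -- hid : ofReal (‖evalPoly P w‖^2) = ρ.eval (s^2) * ofReal (‖c‖^2)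
  have hcne : ((‖c‖^2 : ℝ) : ℂ) ≠ 0 := by
    rw [Complex.ofReal_ne_zero]
    exact pow_ne_zero 2 (norm_ne_zero_iff.mpr hc0)
  have hρval : ρ.eval ((s:ℂ)^2) = ((‖evalPoly P w‖^2 / ‖c‖^2 : ℝ) : ℂ) := by
    rw [Complex.ofReal_div]
    rw [eq_div_iff hcne]
    exact hid.symm
  have hre : (ρ.eval ((s:ℂ)^2)).re = ‖evalPoly P w‖^2 / ‖c‖^2 := by
    rw [hρval, Complex.ofReal_re]
  have hnr : ‖ratMap P q w‖^2 = (ρ.eval ((s:ℂ)^2)).re := by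
    rw [ratMap]
    have hqc' : MvPolynomial.eval (fun j => w j) q = c := hqc
    rw [hqc', norm_smul, norm_inv, mul_pow, hre]
    have hcne' : ‖c‖ ≠ 0 := norm_ne_zero_iff.mpr hc0
    field_simp
  rw [← Real.sqrt_sq (norm_nonneg (ratMap P q w)), hnr]
end

section
/- (D'Angelo's unitary equivalence lemma) Let p : ℂⁿ → ℂ^m and q : ℂⁿ → ℂ^k be vector-valued polynomials with ‖p(z)‖² = ‖q(z)‖² for all z ∈ ℂⁿ. Then there exists a unitary matrix U of size max(m,k) such that U(p ⊕ 0) = q ⊕ 0, where ⊕ 0 denotes padding with zero components to reach dimension max(m,k). -/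
open MvPolynomial Metric

/-- Padding a vector with zero components up to dimension `M`. -/
def padZero {a : ℕ} (M : ℕ) (v : Fin a → ℂ) : Fin M → ℂ :=
  fun j => if h : (j : ℕ) < a then v ⟨j, h⟩ else 0

open Finset Complex

/-- A complex polynomial vanishing at all real points is zero. -/
theorem vanish_real : ∀ (k : ℕ) (H : MvPolynomial (Fin k) ℂ),
    (∀ x : Fin k → ℝ, eval (fun i => (x i : ℂ)) H = 0) → H = 0 := by
  intro k
  induction k with
  | zero =>
      intro H h
      have := h (fun i => 0)
      rw [eq_C_of_isEmpty H] at this ⊢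
      simpa using this
  | succ k ih =>
      intro H h
      have key : ∀ s : Fin k → ℝ,
          Polynomial.map (eval fun i => (s i : ℂ)) (finSuccEquiv ℂ k H) = 0 := by
        intro s
        apply Polynomial.eq_zero_of_infinite_isRoot
        apply Set.Infinite.mono (s := Set.range (fun r : ℝ => (r : ℂ)))
        · intro c hc
          obtain ⟨r, rfl⟩ := hc
          have := h (Fin.cons r s)
          rw [show (fun i => ((Fin.cons r s : Fin (k+1) → ℝ) i : ℂ))
              = Fin.cons (r : ℂ) (fun i => (s i : ℂ)) from funext (Fin.cases rfl (fun i => rfl)),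
            eval_eq_eval_mv_eval'] at this
          exact this
        · exact Set.infinite_range_of_injective (fun x y => by exact_mod_cast id)
      have : finSuccEquiv ℂ k H = 0 := by
        apply Polynomial.ext; intro m
        rw [Polynomial.coeff_zero]
        apply ih
        intro s
        have := congrArg (fun P => Polynomial.coeff P m) (key s)
        simpa [Polynomial.coeff_map] using this
      have := congrArg (finSuccEquiv ℂ k).symm this
      simpa using this

theorem vanish_real' {σ : Type*} [Fintype σ] (H : MvPolynomial σ ℂ)
    (h : ∀ x : σ → ℝ, eval (fun i => (x i : ℂ)) H = 0) : H = 0 := by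
  obtain ⟨k, ⟨e⟩⟩ : ∃ k : ℕ, Nonempty (σ ≃ Fin k) :=
    ⟨Fintype.card σ, ⟨Fintype.equivFin σ⟩⟩
  have h2 : rename e H = 0 := by
    apply vanish_real
    intro x
    rw [eval_rename]
    exact h (fun i => x (e i))
  have := (rename_injective (R := ℂ) e e.injective)
  apply this
  simpa using h2

theorem eval_conj {σ : Type*} (z : σ → ℂ) (P : MvPolynomial σ ℂ) :
    eval (fun i => (starRingEnd ℂ) (z i)) (map (starRingEnd ℂ) P)
      = (starRingEnd ℂ) (eval z P) := by
  rw [eval_map, ← eval₂_id (g := z) P, eval₂_comp_left]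
  rfl

theorem two_point {n a b : ℕ}
    (p : Fin a → MvPolynomial (Fin n) ℂ) (q : Fin b → MvPolynomial (Fin n) ℂ)
    (hdiag : ∀ z : Fin n → ℂ,
      ∑ i, (starRingEnd ℂ) (eval z (p i)) * eval z (p i)
        = ∑ j, (starRingEnd ℂ) (eval z (q j)) * eval z (q j)) :
    ∀ z w : Fin n → ℂ,
      ∑ i, (starRingEnd ℂ) (eval z (p i)) * eval w (p i)
        = ∑ j, (starRingEnd ℂ) (eval z (q j)) * eval w (q j) := by
  set c := starRingEnd ℂ
  set G : MvPolynomial (Fin n ⊕ Fin n) ℂ :=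
    (∑ i, rename Sum.inl (map c (p i)) * rename Sum.inr (p i))
      - ∑ j, rename Sum.inl (map c (q j)) * rename Sum.inr (q j) with hG
  have hGeval : ∀ z w : Fin n → ℂ,
      eval (Sum.elim (fun j => c (z j)) w) G
        = ∑ i, c (eval z (p i)) * eval w (p i) - ∑ j, c (eval z (q j)) * eval w (q j) := by
    intro z w
    simp only [hG, map_sub, map_sum, map_mul, eval_rename]
    have h1 : (Sum.elim (fun j => c (z j)) w) ∘ Sum.inl = fun j => c (z j) := rfl
    have h2 : (Sum.elim (fun j => c (z j)) w) ∘ Sum.inr = w := rfl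
    rw [h1, h2]
    congr 1 <;> (apply Finset.sum_congr rfl; intro i _; rw [eval_conj])
  -- the substituted polynomial vanishes at real points
  set g : Fin n ⊕ Fin n → MvPolynomial (Fin n ⊕ Fin n) ℂ :=
    Sum.elim (fun j => X (Sum.inl j) - C Complex.I * X (Sum.inr j))
      (fun j => X (Sum.inl j) + C Complex.I * X (Sum.inr j)) with hg
  have hbind : ∀ t : Fin n ⊕ Fin n → ℂ,
      eval t (bind₁ g G) = eval (fun s => eval t (g s)) G := by
    intro t
    exact eval₂Hom_bind₁ (RingHom.id ℂ) t g G
  have hH0 : bind₁ g G = 0 := by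
    apply vanish_real'
    intro x
    rw [hbind]
    set z : Fin n → ℂ := fun j => (x (Sum.inl j) : ℂ) + Complex.I * (x (Sum.inr j) : ℂ) with hz
    have hpt : (fun s => eval (fun i => ((x i : ℂ))) (g s))
        = Sum.elim (fun j => c (z j)) z := by
      funext s
      cases s with
      | inl j => simp [hg, hz, c, Complex.ext_iff]
      | inr j => simp [hg, hz]
    rw [hpt, hGeval]
    have := hdiag z
    rw [this]; ring
  intro z w
  have key : eval (Sum.elim (fun j => c (z j)) w) G = 0 := by
    set t : Fin n ⊕ Fin n → ℂ :=
      Sum.elim (fun j => (c (z j) + w j) / 2) (fun j => (w j - c (z j)) / (2 * Complex.I)) with ht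
    have : eval t (bind₁ g G) = 0 := by rw [hH0]; simp
    rw [hbind] at this
    have hfun : (fun s => eval t (g s)) = Sum.elim (fun j => c (z j)) w := by
      funext s
      cases s with
      | inl j =>
          simp only [ht, hg, Sum.elim_inl, Sum.elim_inr, map_sub, map_add, map_mul, eval_X, eval_C]
          field_simp
          ring
      | inr j =>
          simp only [ht, hg, Sum.elim_inl, Sum.elim_inr, map_sub, map_add, map_mul, eval_X, eval_C]
          field_simp
          ring
    rw [hfun] at this
    exact this
  have := hGeval z w
  rw [key] at this
  linear_combination -this

local notation "⟪" x ", " y "⟫" => @inner ℂ _ _ x y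

lemma sum_pad {a M : ℕ} (h : a ≤ M) (x y : Fin a → ℂ) :
    ∑ i : Fin M, (starRingEnd ℂ) (padZero M x i) * padZero M y i
      = ∑ i : Fin a, (starRingEnd ℂ) (x i) * y i := by
  set F : ℕ → ℂ := fun k => if hk : k < a then (starRingEnd ℂ) (x ⟨k, hk⟩) * y ⟨k, hk⟩ else 0 with hF
  have h1 : ∑ i : Fin M, (starRingEnd ℂ) (padZero M x i) * padZero M y i
      = ∑ k ∈ Finset.range M, F k := by
    rw [Finset.sum_range fun k => F k]
    apply Finset.sum_congr rfl
    intro i _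
    by_cases hi : (i : ℕ) < a <;> simp [padZero, hF, hi]
  have h2 : ∑ i : Fin a, (starRingEnd ℂ) (x i) * y i = ∑ k ∈ Finset.range a, F k := by
    rw [Finset.sum_range fun k => F k]
    apply Finset.sum_congr rfl
    intro i _
    simp [hF, i.isLt]
  rw [h1, h2]
  symm
  apply Finset.sum_subset (Finset.range_subset_range.2 h)
  intro k _ hk
  simp only [Finset.mem_range, not_lt] at hk
  rw [hF]
  exact dif_neg (not_lt.2 hk)

lemma exists_unitary {ι : Type*} {M : ℕ} (u v : ι → EuclideanSpace ℂ (Fin M))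
    (hGram : ∀ z w : ι, ⟪u z, u w⟫ = ⟪v z, v w⟫) :
    ∃ U ∈ Matrix.unitaryGroup (Fin M) ℂ, ∀ z : ι, U.mulVec (u z) = v z := by
  classical
  set L : (ι →₀ ℂ) →ₗ[ℂ] EuclideanSpace ℂ (Fin M) := Finsupp.linearCombination ℂ u with hL
  set L' : (ι →₀ ℂ) →ₗ[ℂ] EuclideanSpace ℂ (Fin M) := Finsupp.linearCombination ℂ v with hL'
  have hLinner : ∀ c d : ι →₀ ℂ, ⟪L c, L d⟫ = ⟪L' c, L' d⟫ := by
    intro c d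
    simp only [hL, hL', Finsupp.linearCombination_apply, Finsupp.sum, sum_inner, inner_sum,
      inner_smul_left, inner_smul_right]
    exact Finset.sum_congr rfl fun z _ => congrArg (d z * ·)
      (Finset.sum_congr rfl fun w _ => by rw [hGram])
  have hLnorm : ∀ c : ι →₀ ℂ, ‖L c‖ = ‖L' c‖ := by
    intro c
    have := hLinner c c
    rw [inner_self_eq_norm_sq_to_K, inner_self_eq_norm_sq_to_K] at this
    have h2 : (‖L c‖ : ℝ) ^ 2 = (‖L' c‖ : ℝ) ^ 2 := by exact_mod_cast this
    exact (sq_eq_sq₀ (norm_nonneg _) (norm_nonneg _)).mp h2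
  have hker : LinearMap.ker L ≤ LinearMap.ker L' := by
    intro c hc
    rw [LinearMap.mem_ker] at hc ⊢
    have := hLnorm c
    rw [hc, norm_zero] at this
    exact norm_eq_zero.mp this.symm
  set f0 : ((ι →₀ ℂ) ⧸ LinearMap.ker L) →ₗ[ℂ] EuclideanSpace ℂ (Fin M) := Submodule.liftQ _ L' hker with hf0
  set e := LinearMap.quotKerEquivRange L with he
  set f : LinearMap.range L →ₗ[ℂ] EuclideanSpace ℂ (Fin M) := f0 ∘ₗ e.symm.toLinearMap with hf
  have hfL : ∀ c : ι →₀ ℂ, f ⟨L c, LinearMap.mem_range_self L c⟩ = L' c := by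
    intro c
    have h1 : e (Submodule.Quotient.mk c) = ⟨L c, LinearMap.mem_range_self L c⟩ :=
      Subtype.ext (LinearMap.quotKerEquivRange_apply_mk L c)
    rw [hf]
    simp only [LinearMap.coe_comp, Function.comp_apply, LinearEquiv.coe_toLinearMap]
    rw [← h1, LinearEquiv.symm_apply_apply, hf0, Submodule.liftQ_apply]
  have hiso : ∀ s : LinearMap.range L, ‖f s‖ = ‖s‖ := by
    rintro ⟨s, hs⟩
    obtain ⟨c, rfl⟩ := hs
    rw [hfL c, ← hLnorm c]
    rfl
  set T : EuclideanSpace ℂ (Fin M) →ₗᵢ[ℂ] EuclideanSpace ℂ (Fin M) :=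
    (LinearIsometry.mk f hiso).extend with hT
  have hTu : ∀ z : ι, T (u z) = v z := by
    intro z
    have h1 : L (Finsupp.single z 1) = u z := by
      rw [hL, Finsupp.linearCombination_single, one_smul]
    have h2 : T (L (Finsupp.single z 1)) = f ⟨L (Finsupp.single z 1), LinearMap.mem_range_self _ _⟩ := by
      have := LinearIsometry.extend_apply (LinearIsometry.mk f hiso)
        ⟨L (Finsupp.single z 1), LinearMap.mem_range_self _ _⟩
      rw [← hT] at this
      exact this
    rw [← h1, h2, hfL, hL', Finsupp.linearCombination_single, one_smul]
  set U : Matrix (Fin M) (Fin M) ℂ := fun i j => T (EuclideanSpace.single j 1) i with hU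
  have hUapp : ∀ x : EuclideanSpace ℂ (Fin M), U.mulVec x = T x := by
    intro x
    funext i
    have hx : x = ∑ j : Fin M, x j • EuclideanSpace.single j (1 : ℂ) := by
      ext k
      rw [WithLp.ofLp_sum, Finset.sum_apply]
      simp [EuclideanSpace.single_apply]
    rw [Matrix.mulVec, dotProduct]
    conv_rhs => rw [hx]
    rw [map_sum]
    rw [WithLp.ofLp_sum, Finset.sum_apply]
    apply Finset.sum_congr rfl
    intro j _
    rw [LinearIsometry.map_smul]
    simp [hU, PiLp.smul_apply, smul_eq_mul, mul_comm]
  have hUmem : U ∈ Matrix.unitaryGroup (Fin M) ℂ := by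
    rw [Matrix.mem_unitaryGroup_iff']
    ext i j
    rw [Matrix.mul_apply, Matrix.one_apply]
    have : ∀ k, (star U) i k * U k j = (starRingEnd ℂ) (U k i) * U k j := by
      intro k; rfl
    simp_rw [this]
    have h1 : ∑ k, (starRingEnd ℂ) (U k i) * U k j
        = ⟪T (EuclideanSpace.single i (1:ℂ)), T (EuclideanSpace.single j (1:ℂ))⟫ := by
      rw [PiLp.inner_apply]
      apply Finset.sum_congr rfl
      intro k _
      exact mul_comm _ _
    rw [h1, LinearIsometry.inner_map_map]
    rw [PiLp.inner_apply]
    simp only [EuclideanSpace.single_apply, RCLike.inner_apply, apply_ite (starRingEnd ℂ),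
      map_one, map_zero, ite_mul, one_mul, zero_mul, mul_ite, mul_one, mul_zero]
    by_cases h : i = j
    · simp [h]
    · simpa [h] using Ne.symm h
  exact ⟨U, hUmem, fun z => by rw [hUapp (u z), hTu]⟩


/-- D'Angelo's unitary equivalence lemma: if two vector-valued
polynomials satisfy `‖p(z)‖² = ‖q(z)‖²` for all `z`, then there is a unitary
`U` of size `max m k` with `U (p ⊕ 0) = q ⊕ 0`. -/
theorem dangelo_unitary_lemma {n a b : ℕ}
    (p : Fin a → MvPolynomial (Fin n) ℂ) (q : Fin b → MvPolynomial (Fin n) ℂ)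
    (hnorm : ∀ z : EuclideanSpace ℂ (Fin n), ‖evalPoly p z‖ = ‖evalPoly q z‖) :
    ∃ U ∈ Matrix.unitaryGroup (Fin (max a b)) ℂ,
      ∀ z : EuclideanSpace ℂ (Fin n),
        U.mulVec (padZero (max a b) (fun i => evalPoly p z i)) =
          padZero (max a b) (fun i => evalPoly q z i) := by
  have hself : ∀ {N : ℕ} (P : Fin N → MvPolynomial (Fin n) ℂ) (z : Fin n → ℂ),
      ∑ i, (starRingEnd ℂ) (MvPolynomial.eval z (P i)) * MvPolynomial.eval z (P i)
        = inner (𝕜 := ℂ) (evalPoly P (WithLp.toLp 2 z)) (evalPoly P (WithLp.toLp 2 z)) := by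
    intro N P z
    rw [PiLp.inner_apply]
    exact Finset.sum_congr rfl fun i _ => mul_comm _ _
  have hdiag : ∀ z : Fin n → ℂ,
      ∑ i, (starRingEnd ℂ) (MvPolynomial.eval z (p i)) * MvPolynomial.eval z (p i)
        = ∑ j, (starRingEnd ℂ) (MvPolynomial.eval z (q j)) * MvPolynomial.eval z (q j) := by
    intro z
    rw [hself p z, hself q z, inner_self_eq_norm_sq_to_K, inner_self_eq_norm_sq_to_K, hnorm (WithLp.toLp 2 z)]
  have htwo := two_point p q hdiag
  apply exists_unitary (fun z : EuclideanSpace ℂ (Fin n) => WithLp.toLp 2 (padZero (max a b) (fun i => evalPoly p z i)))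
    (fun z : EuclideanSpace ℂ (Fin n) => WithLp.toLp 2 (padZero (max a b) (fun i => evalPoly q z i)))
  intro z w
  rw [PiLp.inner_apply, PiLp.inner_apply]
  have hP : ∀ (k : Fin (max a b)),
      (inner (𝕜 := ℂ) (padZero (max a b) (fun i => evalPoly p z i) k) (padZero (max a b) (fun i => evalPoly p w i) k))
      = (starRingEnd ℂ) (padZero (max a b) (fun i => evalPoly p z i) k) * (padZero (max a b) (fun i => evalPoly p w i) k) :=
    fun k => mul_comm _ _
  calc ∑ k, (inner (𝕜 := ℂ) (padZero (max a b) (fun i => evalPoly p z i) k) (padZero (max a b) (fun i => evalPoly p w i) k))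
      = ∑ i : Fin a, (starRingEnd ℂ) (evalPoly p z i) * evalPoly p w i := by
        rw [Finset.sum_congr rfl fun k _ => hP k]
        exact sum_pad (le_max_left a b) _ _
    _ = ∑ j : Fin b, (starRingEnd ℂ) (evalPoly q z j) * evalPoly q w j := htwo _ _
    _ = ∑ k, (inner (𝕜 := ℂ) (padZero (max a b) (fun i => evalPoly q z i) k) (padZero (max a b) (fun i => evalPoly q w i) k)) := by
        rw [Finset.sum_congr rfl fun k _ => (show inner (𝕜 := ℂ) (padZero (max a b) (fun i => evalPoly q z i) k) (padZero (max a b) (fun i => evalPoly q w i) k) = (starRingEnd ℂ) (padZero (max a b) (fun i => evalPoly q z i) k) * (padZero (max a b) (fun i => evalPoly q w i) k) from mul_comm _ _)]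
        exact (sum_pad (le_max_right a b) _ _).symm
end

section
/- Let f : ℂⁿ → ℂᴺ be a polynomial map of degree m such that ‖f(z)‖² = C₀ + C₁‖z‖² + ⋯ + C_m‖z‖^{2m} for nonnegative reals C_j with C_m > 0. Then there exist a unitary U ∈ U(ℂᴺ) and homogeneous maps h_j : ℂⁿ → ℂ^{ℓ_j} (each h_j a positive scalar multiple of the symmetrized d_j-fold tensor power H_{d_j} of the identity, possibly a constant for d_j = 0) with ℓ₁ + ⋯ + ℓ_k ≤ N, such that f = U(h₁ ⊕ ⋯ ⊕ h_k ⊕ 0). -/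
open MvPolynomial Metric

lemma zero_of_eval_real_fin (k : ℕ) (P : MvPolynomial (Fin k) ℂ)
    (h : ∀ x : Fin k → ℝ, MvPolynomial.eval (fun i => (x i : ℂ)) P = 0) : P = 0 := by
  induction k with
  | zero =>
    obtain ⟨a, rfl⟩ := MvPolynomial.C_surjective (Fin 0) P
    have := h 0
    simpa using this
  | succ k ih =>
    have key : finSuccEquiv ℂ k P = 0 := by
      apply Polynomial.ext
      intro j
      simp only [Polynomial.coeff_zero]
      -- show coeff j = 0 using ih
      have : (finSuccEquiv ℂ k P).coeff j = 0 := by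
        apply ih
        intro x
        have hq : Polynomial.map (MvPolynomial.eval (fun i => (x i : ℂ))) (finSuccEquiv ℂ k P) = 0 := by
          apply Polynomial.eq_zero_of_infinite_isRoot
          apply Set.Infinite.mono (s := Set.range ((↑) : ℝ → ℂ))
          · rintro _ ⟨y, rfl⟩
            have := h (Fin.cons y x)
            rw [show (fun i => ((Fin.cons y x : Fin (k+1) → ℝ) i : ℂ)) =
                Fin.cons (y : ℂ) (fun i => (x i : ℂ)) from funext (Fin.cases rfl (fun i => rfl))] at this
            rw [eval_eq_eval_mv_eval'] at this
            exact this
          · exact Set.infinite_range_of_injective Complex.ofReal_injective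
        have := congrArg (fun q => Polynomial.coeff q j) hq
        simpa [Polynomial.coeff_map] using this
      simpa using this
    have := (finSuccEquiv ℂ k).injective (a₂ := 0) (by simpa using key)
    simpa using this

lemma zero_of_eval_real {σ : Type*} [Fintype σ] (P : MvPolynomial σ ℂ)
    (h : ∀ x : σ → ℝ, MvPolynomial.eval (fun i => (x i : ℂ)) P = 0) : P = 0 := by
  let e := Fintype.equivFin σ
  have : rename e P = 0 := by
    apply zero_of_eval_real_fin
    intro x
    rw [eval_rename]
    exact h (fun i => x (e i))
  have := (rename_injective (R := ℂ) e e.injective) (a₂ := 0) (by simpa using this)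
  simpa using this

lemma eval_aeval' {σ τ : Type*} (g : τ → ℂ) (f : σ → MvPolynomial τ ℂ) (p : MvPolynomial σ ℂ) :
    eval g (aeval f p) = eval (fun i => eval g (f i)) p := by
  induction p using MvPolynomial.induction_on with
  | C a => simp
  | add p q hp hq => simp only [map_add, hp, hq]
  | mul_X p s hp => simp only [map_mul, hp, aeval_X, eval_X]

noncomputable def psiF (n : ℕ) : MvPolynomial (Fin n ⊕ Fin n) ℂ →ₐ[ℂ] MvPolynomial (Fin n ⊕ Fin n) ℂ :=
  aeval (Sum.elim (fun t => X (Sum.inl t) + C Complex.I * X (Sum.inr t))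
                  (fun t => X (Sum.inl t) - C Complex.I * X (Sum.inr t)))

noncomputable def psiInv (n : ℕ) : MvPolynomial (Fin n ⊕ Fin n) ℂ →ₐ[ℂ] MvPolynomial (Fin n ⊕ Fin n) ℂ :=
  aeval (Sum.elim (fun t => C (2⁻¹ : ℂ) * (X (Sum.inl t) + X (Sum.inr t)))
                  (fun t => C ((2 * Complex.I)⁻¹ : ℂ) * (X (Sum.inl t) - X (Sum.inr t))))

lemma psi_leftinv (n : ℕ) (p : MvPolynomial (Fin n ⊕ Fin n) ℂ) : psiInv n (psiF n p) = p := by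
  have hI : (Complex.I * (2 * Complex.I)⁻¹ : ℂ) = 2⁻¹ := by
    field_simp
  have h : (psiInv n).comp (psiF n) = AlgHom.id ℂ _ := by
    apply MvPolynomial.algHom_ext
    intro s
    cases s with
    | inl t =>
      simp only [AlgHom.comp_apply, psiF, psiInv, aeval_X, Sum.elim_inl, Sum.elim_inr,
        map_add, map_mul, AlgHom.id_apply, aeval_C, algebraMap_eq]
      simp only [C_mul', smul_smul, hI]
      module
    | inr t =>
      simp only [AlgHom.comp_apply, psiF, psiInv, aeval_X, Sum.elim_inl, Sum.elim_inr,
        map_sub, map_mul, AlgHom.id_apply, aeval_C, algebraMap_eq]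
      simp only [C_mul', smul_smul, hI]
      module
  exact AlgHom.congr_fun h p

lemma zero_of_eval_conj (n : ℕ) (P : MvPolynomial (Fin n ⊕ Fin n) ℂ)
    (h : ∀ z : Fin n → ℂ, MvPolynomial.eval
        (Sum.elim z (fun t => (starRingEnd ℂ) (z t))) P = 0) : P = 0 := by
  have key : psiF n P = 0 := by
    apply zero_of_eval_real (σ := Fin n ⊕ Fin n)
    intro x
    rw [psiF, eval_aeval']
    set z : Fin n → ℂ := fun t => (x (Sum.inl t) : ℂ) + Complex.I * (x (Sum.inr t) : ℂ) with hz
    have hfun : (fun i => eval (fun i => (x i : ℂ))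
        ((Sum.elim (fun t => X (Sum.inl t) + C Complex.I * X (Sum.inr t))
          (fun t => X (Sum.inl t) - C Complex.I * X (Sum.inr t)) : Fin n ⊕ Fin n → MvPolynomial (Fin n ⊕ Fin n) ℂ) i))
        = Sum.elim z (fun t => (starRingEnd ℂ) (z t)) := by
      funext s
      cases s with
      | inl t => simp [hz]
      | inr t => simp [hz, Complex.ext_iff]
    rw [hfun]
    exact h z
  have := psi_leftinv n P
  rw [key] at this
  simpa using this.symm

noncomputable def MsumN (n : ℕ) : MvPolynomial (Fin n) ℕ := ∑ t, X t

noncomputable def Mons (n d : ℕ) : Finset (Fin n →₀ ℕ) := (MsumN n ^ d).support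

lemma degree_add' {σ : Type*} (a b : σ →₀ ℕ) : (a + b).degree = a.degree + b.degree := by
  simp [Finsupp.degree_eq_weight_one, map_add]

lemma degree_single' {σ : Type*} (t : σ) : (Finsupp.single t 1).degree = 1 := by
  show ∑ i ∈ (Finsupp.single t 1).support, (Finsupp.single t 1) i = 1
  simp [Finsupp.degree, Finsupp.support_single_ne_zero t one_ne_zero]

lemma msumN_homog (n d : ℕ) : (MsumN n ^ d).IsHomogeneous d := by
  have h1 : (MsumN n).IsHomogeneous 1 :=
    IsHomogeneous.sum _ _ _ (fun i _ => isHomogeneous_X _ _)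
  simpa using h1.pow d

lemma mem_Mons_degree {n d : ℕ} {s : Fin n →₀ ℕ} (h : s ∈ Mons n d) : s.degree = d := by
  by_contra hc
  exact (MvPolynomial.mem_support_iff.mp h) ((msumN_homog n d).coeff_eq_zero hc)

lemma degree_mem_Mons' {n : ℕ} {d : ℕ} : ∀ (s : Fin n →₀ ℕ), s.degree = d → s ∈ Mons n d := by
  induction d with
  | zero =>
    intro s hd
    rw [Finsupp.degree_eq_zero_iff] at hd
    subst hd
    simp [Mons, map_zero]
  | succ d ih =>
    intro s hd
    -- pick t with s t ≠ 0
    have hs0 : s ≠ 0 := by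
      intro h0; rw [h0, map_zero] at hd; exact Nat.succ_ne_zero d hd.symm
    obtain ⟨t, ht⟩ : ∃ t, s t ≠ 0 := by
      by_contra hc
      push_neg at hc
      exact hs0 (Finsupp.ext fun a => hc a)
    set s' : Fin n →₀ ℕ := s - Finsupp.single t 1 with hs'
    have hsum : s' + Finsupp.single t 1 = s := by
      ext a
      by_cases hat : a = t
      · subst hat
        simp [hs', Nat.sub_add_cancel (Nat.one_le_iff_ne_zero.mpr ht)]
      · simp [hs', Finsupp.single_apply, Ne.symm hat, hat]
    have hdeg' : s'.degree = d := by
      have := (degree_add' s' (Finsupp.single t 1)).symm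
      rw [hsum, hd, degree_single'] at this
      omega
    have hmem' : s' ∈ Mons n d := ih s' hdeg'
    rw [Mons, mem_support_iff] at hmem' ⊢
    intro hzero
    apply hmem'
    have : (MsumN n : MvPolynomial (Fin n) ℕ) ^ (d+1) = ∑ u, (MsumN n ^ d * X u) := by
      rw [pow_succ, MsumN, Finset.mul_sum]
    rw [this, coeff_sum] at hzero
    have hterm : coeff s (MsumN n ^ d * X t) = 0 :=
      Finset.sum_eq_zero_iff.mp hzero t (Finset.mem_univ t)
    rwa [← hsum, coeff_mul_X] at hterm

lemma mem_Mons_iff {n d : ℕ} {s : Fin n →₀ ℕ} : s ∈ Mons n d ↔ s.degree = d :=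
  ⟨mem_Mons_degree, degree_mem_Mons' s⟩

lemma self_mem_Mons {n : ℕ} (s : Fin n →₀ ℕ) : s ∈ Mons n s.degree := degree_mem_Mons' s rfl

/-- the multinomial identity over a commutative ring -/
lemma multinomial_eval {R : Type*} [CommSemiring R] (n d : ℕ) (y : Fin n → R) :
    ∑ s ∈ Mons n d, ((coeff s (MsumN n ^ d) : ℕ) : R) *
      ∏ t ∈ s.support, y t ^ s t = (∑ t, y t) ^ d := by
  have hmap : (map (Nat.castRingHom R) (MsumN n ^ d)) = (∑ t, (X t : MvPolynomial (Fin n) R)) ^ d := by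
    rw [map_pow, MsumN, map_sum]
    simp
  have heval : eval y ((∑ t, (X t : MvPolynomial (Fin n) R)) ^ d) = (∑ t, y t) ^ d := by
    simp
  rw [← heval, ← hmap, eval_eq]
  rw [Finset.sum_subset (support_map_subset _ _)]
  · apply Finset.sum_congr rfl
    intro s _
    rw [coeff_map]
    rfl
  · intro s _ hnot
    rw [mem_support_iff, not_not] at hnot
    rw [hnot, zero_mul]

noncomputable def Emb {n : ℕ} (s t : Fin n →₀ ℕ) : (Fin n ⊕ Fin n) →₀ ℕ :=
  Finsupp.mapDomain Sum.inl s + Finsupp.mapDomain Sum.inr t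

lemma Emb_apply_inl {n : ℕ} (s t : Fin n →₀ ℕ) (x : Fin n) : Emb s t (Sum.inl x) = s x := by
  rw [Emb, Finsupp.add_apply, Finsupp.mapDomain_apply Sum.inl_injective,
    Finsupp.mapDomain_notin_range _ _ (by simp), add_zero]

lemma Emb_apply_inr {n : ℕ} (s t : Fin n →₀ ℕ) (x : Fin n) : Emb s t (Sum.inr x) = t x := by
  rw [Emb, Finsupp.add_apply, Finsupp.mapDomain_apply Sum.inr_injective,
    Finsupp.mapDomain_notin_range _ _ (by simp), zero_add]

lemma Emb_inj {n : ℕ} {s t s' t' : Fin n →₀ ℕ} (h : Emb s t = Emb s' t') : s = s' ∧ t = t' := by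
  constructor
  · ext x; have := congrFun (congrArg (↑·) h) (Sum.inl x)
    simpa [Emb_apply_inl] using this
  · ext x; have := congrFun (congrArg (↑·) h) (Sum.inr x)
    simpa [Emb_apply_inr] using this

lemma coeff_Emb_monomial {n : ℕ} (s t s' t' : Fin n →₀ ℕ) (a : ℂ) :
    coeff (Emb s t) (monomial (Emb s' t') a) = if s' = s ∧ t' = t then a else 0 := by
  rw [coeff_monomial]
  congr 1
  simp only [eq_iff_iff]
  constructor
  · intro h; exact Emb_inj h
  · rintro ⟨rfl, rfl⟩; rfl

lemma coeff_Emb_mul {n : ℕ} (p q : MvPolynomial (Fin n) ℂ) (s t : Fin n →₀ ℕ) :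
    coeff (Emb s t) (rename Sum.inl p * rename Sum.inr q) = coeff s p * coeff t q := by
  conv_lhs => rw [p.as_sum, q.as_sum, map_sum, map_sum, Finset.sum_mul_sum]
  rw [coeff_sum]
  simp only [coeff_sum, rename_monomial, monomial_mul]
  have : ∀ s' ∈ p.support, ∀ t' ∈ q.support,
      coeff (Emb s t) (monomial (Finsupp.mapDomain Sum.inl s' + Finsupp.mapDomain Sum.inr t')
        (coeff s' p * coeff t' q)) = if s' = s ∧ t' = t then coeff s' p * coeff t' q else 0 :=
    fun s' _ t' _ => coeff_Emb_monomial s t s' t' _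
  rw [Finset.sum_congr rfl (fun s' hs' => Finset.sum_congr rfl (fun t' ht' => this s' hs' t' ht'))]
  simp only [ite_and]
  rw [Finset.sum_comm]
  have h1 : ∀ y ∈ q.support, (∑ x ∈ p.support, if x = s then
      (if y = t then coeff x p * coeff y q else 0) else 0) =
      if s ∈ p.support then (if y = t then coeff s p * coeff y q else 0) else 0 :=
    fun y _ => Finset.sum_ite_eq' _ _ _
  rw [Finset.sum_congr rfl h1]
  by_cases hs : s ∈ p.support
  · simp only [if_pos hs]
    rw [Finset.sum_ite_eq' q.support t]
    by_cases ht : t ∈ q.support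
    · rw [if_pos ht]
    · rw [if_neg ht, notMem_support_iff.mp ht, mul_zero]
  · simp only [if_neg hs]
    rw [notMem_support_iff.mp hs, zero_mul]
    exact Finset.sum_const_zero

lemma monomial_Emb_eq {n : ℕ} (s t : Fin n →₀ ℕ) (a : ℂ) :
    (monomial (Emb s t) a : MvPolynomial (Fin n ⊕ Fin n) ℂ) =
      C a * rename Sum.inl (monomial s 1) * rename Sum.inr (monomial t 1) := by
  rw [rename_monomial, rename_monomial, mul_assoc, monomial_mul, one_mul, C_mul_monomial, mul_one]
  rfl

lemma eval_map_conj {n : ℕ} (z : Fin n → ℂ) (p : MvPolynomial (Fin n) ℂ) :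
    eval (fun t => (starRingEnd ℂ) (z t)) (map (starRingEnd ℂ) p) = (starRingEnd ℂ) (eval z p) := by
  induction p using MvPolynomial.induction_on with
  | C a => simp
  | add p q hp hq => simp [hp, hq]
  | mul_X p s hp => simp [hp]

lemma gram_lemma {n N m : ℕ} (f : Fin N → MvPolynomial (Fin n) ℂ) (C : ℕ → ℝ)
    (hnorm : ∀ z : Fin n → ℂ,
      (∑ i, eval z (f i) * (starRingEnd ℂ) (eval z (f i))) =
      ∑ j ∈ Finset.range (m+1), (C j : ℂ) * (∑ t, z t * (starRingEnd ℂ) (z t)) ^ j) :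
    ∀ s t : Fin n →₀ ℕ,
      (∑ i, coeff s (f i) * (starRingEnd ℂ) (coeff t (f i))) =
      if s = t ∧ s.degree ≤ m then
        (C s.degree : ℂ) * ((coeff s (MsumN n ^ s.degree) : ℕ) : ℂ) else 0 := by
  set P : MvPolynomial (Fin n ⊕ Fin n) ℂ :=
    ∑ i, rename Sum.inl (f i) * rename Sum.inr (map (starRingEnd ℂ) (f i)) with hP
  set Q : MvPolynomial (Fin n ⊕ Fin n) ℂ :=
    ∑ j ∈ Finset.range (m+1), ∑ s ∈ Mons n j,
      monomial (Emb s s) ((C j : ℂ) * ((coeff s (MsumN n ^ j) : ℕ) : ℂ)) with hQ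
  -- evaluation of P
  have hPeval : ∀ z : Fin n → ℂ,
      eval (Sum.elim z (fun t => (starRingEnd ℂ) (z t))) P =
      ∑ i, eval z (f i) * (starRingEnd ℂ) (eval z (f i)) := by
    intro z
    rw [hP, map_sum]
    apply Finset.sum_congr rfl
    intro i _
    rw [map_mul, eval_rename, eval_rename, Sum.elim_comp_inl, Sum.elim_comp_inr]
    rw [eval_map_conj z (f i)]
  -- evaluation of Q
  have hQeval : ∀ z : Fin n → ℂ,
      eval (Sum.elim z (fun t => (starRingEnd ℂ) (z t))) Q =
      ∑ j ∈ Finset.range (m+1), (C j : ℂ) * (∑ t, z t * (starRingEnd ℂ) (z t)) ^ j := by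
    intro z
    rw [hQ, map_sum]
    apply Finset.sum_congr rfl
    intro j _
    rw [map_sum]
    have hterm : ∀ s ∈ Mons n j,
        eval (Sum.elim z (fun t => (starRingEnd ℂ) (z t)))
          (monomial (Emb s s) ((C j : ℂ) * ((coeff s (MsumN n ^ j) : ℕ) : ℂ))) =
        (C j : ℂ) * (((coeff s (MsumN n ^ j) : ℕ) : ℂ) *
          ∏ t ∈ s.support, (z t * (starRingEnd ℂ) (z t)) ^ s t) := by
      intro s _
      rw [monomial_Emb_eq, map_mul, map_mul, eval_C, eval_rename, eval_rename,
        Sum.elim_comp_inl, Sum.elim_comp_inr]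
      have e1 : eval z (monomial s 1) =
          ∏ t ∈ s.support, z t ^ s t := by
        rw [eval_monomial]
        simp [Finsupp.prod]
      have e2 : eval (fun t => (starRingEnd ℂ) (z t)) (monomial s 1) =
          ∏ t ∈ s.support, ((starRingEnd ℂ) (z t)) ^ s t := by
        rw [eval_monomial]
        simp [Finsupp.prod]
      rw [e1, e2]
      rw [mul_assoc, mul_assoc]
      congr 1
      congr 1
      rw [← Finset.prod_mul_distrib]
      exact Finset.prod_congr rfl (fun t _ => (mul_pow _ _ _).symm)
    rw [Finset.sum_congr rfl hterm, ← Finset.mul_sum]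
    congr 1
    exact multinomial_eval n j (fun t => z t * (starRingEnd ℂ) (z t))
  -- P = Q
  have hPQ : P = Q := by
    have hz : P - Q = 0 := by
      apply zero_of_eval_conj
      intro z
      rw [map_sub, hPeval z, hQeval z, hnorm z, sub_self]
    exact sub_eq_zero.mp hz
  intro s t
  have hco := congrArg (coeff (Emb s t)) hPQ
  have hcoP : coeff (Emb s t) P = ∑ i, coeff s (f i) * (starRingEnd ℂ) (coeff t (f i)) := by
    rw [hP, coeff_sum]
    apply Finset.sum_congr rfl
    intro i _
    rw [coeff_Emb_mul, coeff_map]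
  have hcoQ : coeff (Emb s t) Q =
      if s = t ∧ s.degree ≤ m then
        (C s.degree : ℂ) * ((coeff s (MsumN n ^ s.degree) : ℕ) : ℂ) else 0 := by
    rw [hQ, coeff_sum]
    have hj : ∀ j ∈ Finset.range (m+1),
        coeff (Emb s t) (∑ s' ∈ Mons n j,
          monomial (Emb s' s') ((C j : ℂ) * ((coeff s' (MsumN n ^ j) : ℕ) : ℂ))) =
        if j = s.degree then
          (if s = t then (C j : ℂ) * ((coeff s (MsumN n ^ j) : ℕ) : ℂ) else 0) else 0 := by
      intro j _
      rw [coeff_sum]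
      have h1 : ∀ s' ∈ Mons n j,
          coeff (Emb s t) (monomial (Emb s' s') ((C j : ℂ) * ((coeff s' (MsumN n ^ j) : ℕ) : ℂ))) =
          if s' = s then (if s = t then (C j : ℂ) * ((coeff s' (MsumN n ^ j) : ℕ) : ℂ) else 0) else 0 := by
        intro s' _
        rw [coeff_Emb_monomial]
        rcases eq_or_ne s' s with rfl | h1
        · rcases eq_or_ne s' t with rfl | h2
          · simp
          · simp [h2]
        · simp [h1]
      rw [Finset.sum_congr rfl h1, Finset.sum_ite_eq' (Mons n j) s]
      by_cases hm : s ∈ Mons n j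
      · rw [if_pos hm, if_pos (mem_Mons_degree hm).symm]
      · rw [if_neg hm, if_neg]
        intro hc
        exact hm (hc ▸ self_mem_Mons s)
    rw [Finset.sum_congr rfl hj, Finset.sum_ite_eq' (Finset.range (m+1)) s.degree]
    by_cases hdm : s.degree ≤ m
    · rw [if_pos (Finset.mem_range.mpr (Nat.lt_succ_of_le hdm))]
      by_cases hst : s = t
      · subst hst
        simp [hdm]
      · simp [hst]
    · rw [if_neg (fun hc => hdm (Nat.lt_succ_iff.mp (Finset.mem_range.mp hc)))]
      rw [if_neg (fun hc => hdm hc.2)]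
  rw [hcoP, hcoQ] at hco
  exact hco
lemma norm_sq_complex {M : ℕ} (x : EuclideanSpace ℂ (Fin M)) :
    ((‖x‖^2 : ℝ) : ℂ) = ∑ i, x i * (starRingEnd ℂ) (x i) := by
  rw [EuclideanSpace.norm_eq, Real.sq_sqrt (Finset.sum_nonneg fun i _ => sq_nonneg _)]
  rw [show ((∑ i, ‖x i‖^2 : ℝ) : ℂ) = ∑ i, ((‖x i‖^2 : ℝ) : ℂ) by push_cast; ring]
  exact Finset.sum_congr rfl fun i _ => by
    rw [Complex.mul_conj, Complex.normSq_eq_norm_sq]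

set_option maxHeartbeats 2000000

/-- a polynomial map `f` of degree `m` with
`‖f(z)‖² = C₀ + C₁‖z‖² + ⋯ + C_m‖z‖^{2m}` (`C_j ≥ 0`, `C_m > 0`) is, up to a
unitary of the target, a direct sum of homogeneous maps `h_j` (each a scaled
symmetrized tensor power, characterized by homogeneity of degree `d j` and
`‖h_j(z)‖² = C_{d_j} ‖z‖^{2 d_j}`), padded with zero components. -/
theorem decomposition_of_infty_fold {n N : ℕ} (m : ℕ)
    (f : Fin N → MvPolynomial (Fin n) ℂ)
    (hdeg : ∀ i, (f i).totalDegree ≤ m)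
    (C : ℕ → ℝ) (hC0 : ∀ j, 0 ≤ C j) (hCm : 0 < C m)
    (hnorm : ∀ z : EuclideanSpace ℂ (Fin n),
      ‖evalPoly f z‖ ^ 2 = ∑ j ∈ Finset.range (m + 1), C j * ‖z‖ ^ (2 * j)) :
    ∃ U ∈ Matrix.unitaryGroup (Fin N) ℂ,
    ∃ (k : ℕ) (ℓ : Fin k → ℕ) (d : Fin k → ℕ)
      (H : (j : Fin k) → Fin (ℓ j) → MvPolynomial (Fin n) ℂ)
      (e : (Σ j : Fin k, Fin (ℓ j)) → Fin N),
      Function.Injective e ∧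
      (∀ (j : Fin k) (i : Fin (ℓ j)), (H j i).IsHomogeneous (d j)) ∧
      (∀ (j : Fin k) (z : EuclideanSpace ℂ (Fin n)),
        ‖evalPoly (H j) z‖ ^ 2 = C (d j) * ‖z‖ ^ (2 * d j)) ∧
      (∀ z : EuclideanSpace ℂ (Fin n),
        (fun i => evalPoly f z i) =
          U.mulVec (fun i =>
            if h : ∃ s : Σ j : Fin k, Fin (ℓ j), e s = i then
              evalPoly (H h.choose.1) z h.choose.2
            else 0)) := by
  classical
  -- complex reformulation of the norm hypothesis
  have hnormC : ∀ z : Fin n → ℂ,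
      (∑ i, eval z (f i) * (starRingEnd ℂ) (eval z (f i))) =
      ∑ j ∈ Finset.range (m+1), (C j : ℂ) * (∑ t, z t * (starRingEnd ℂ) (z t)) ^ j := by
    intro z
    have h1 := norm_sq_complex (M := N) (evalPoly f (WithLp.toLp 2 z : EuclideanSpace ℂ (Fin n)))
    have h2 := norm_sq_complex (M := n) (WithLp.toLp 2 z : EuclideanSpace ℂ (Fin n))
    have h3 := hnorm (WithLp.toLp 2 z : EuclideanSpace ℂ (Fin n))
    calc (∑ i, eval z (f i) * (starRingEnd ℂ) (eval z (f i)))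
        = ((‖evalPoly f (WithLp.toLp 2 z : EuclideanSpace ℂ (Fin n))‖^2 : ℝ) : ℂ) := h1.symm
      _ = ((∑ j ∈ Finset.range (m+1), C j * ‖(WithLp.toLp 2 z : EuclideanSpace ℂ (Fin n))‖ ^ (2*j) : ℝ) : ℂ) := by
          rw [h3]
      _ = ∑ j ∈ Finset.range (m+1), (C j : ℂ) *
            (((‖(WithLp.toLp 2 z : EuclideanSpace ℂ (Fin n))‖^2 : ℝ) : ℂ)) ^ j := by
          push_cast [pow_mul]
          try ring
      _ = ∑ j ∈ Finset.range (m+1), (C j : ℂ) * (∑ t, z t * (starRingEnd ℂ) (z t)) ^ j := by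
          rw [h2]
  have gram := gram_lemma f C hnormC
  -- coefficient vectors
  set c : (Fin n →₀ ℕ) → EuclideanSpace ℂ (Fin N) := fun s => WithLp.toLp 2 (fun i => coeff s (f i)) with hcdef
  set mlt : (Fin n →₀ ℕ) → ℝ := fun s => ((coeff s (MsumN n ^ s.degree) : ℕ) : ℝ) with hmlt
  have hmltpos : ∀ s, 0 < mlt s := fun s => by
    have h := mem_support_iff.mp (self_mem_Mons s)
    simp only [hmlt]
    exact_mod_cast Nat.pos_of_ne_zero h
  have hinnercc : ∀ s t, (inner ℂ (c s) (c t) : ℂ) =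
      ∑ i, coeff t (f i) * (starRingEnd ℂ) (coeff s (f i)) := by
    intro s t
    rw [PiLp.inner_apply]
    exact Finset.sum_congr rfl fun i _ => by
      rw [RCLike.inner_apply]
  have hclen : ∀ s, (‖c s‖^2 : ℝ) = (if s.degree ≤ m then C s.degree * mlt s else 0) := by
    intro s
    apply Complex.ofReal_injective
    have h1 : ((‖c s‖^2 : ℝ) : ℂ) = inner ℂ (c s) (c s) := by
      rw [inner_self_eq_norm_sq_to_K]
      norm_cast
    rw [h1, hinnercc s s, gram s s]
    by_cases hd : s.degree ≤ m
    · simp [hd, hmlt]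
    · simp [hd]
  have horth : ∀ s t, s ≠ t → (inner ℂ (c s) (c t) : ℂ) = 0 := by
    intro s t hst
    rw [hinnercc s t, gram t s]
    simp [Ne.symm hst]
  -- indexing data
  set D : Finset ℕ := (Finset.range (m+1)).filter (fun j => 0 < C j) with hD
  set k : ℕ := D.card with hk
  set eD : Fin k ≃ {x // x ∈ D} := D.equivFin.symm with heD
  set d : Fin k → ℕ := fun j => ((eD j : ℕ)) with hd
  have hdD : ∀ j, d j ∈ D := fun j => (eD j).2
  have hdm : ∀ j, d j ≤ m := fun j =>
    Nat.lt_succ_iff.mp (Finset.mem_range.mp (Finset.mem_filter.mp (hdD j)).1)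
  have hdpos : ∀ j, 0 < C (d j) := fun j => (Finset.mem_filter.mp (hdD j)).2
  have hdinj : Function.Injective d := fun a b h => eD.injective (Subtype.ext h)
  set ℓ : Fin k → ℕ := fun j => (Mons n (d j)).card with hℓ
  set eM : (j : Fin k) → (Fin (ℓ j) ≃ {x // x ∈ Mons n (d j)}) :=
    fun j => (Mons n (d j)).equivFin.symm with heM
  set sIdx : (Σ j : Fin k, Fin (ℓ j)) → (Fin n →₀ ℕ) := fun a => ((eM a.1 a.2 : _)) with hsIdx
  have hsmem : ∀ a, sIdx a ∈ Mons n (d a.1) := fun a => (eM a.1 a.2).2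
  have hsdeg : ∀ a, (sIdx a).degree = d a.1 := fun a => mem_Mons_degree (hsmem a)
  have hsinj : Function.Injective sIdx := by
    rintro ⟨j, i⟩ ⟨j', i'⟩ h
    have hj : j = j' := hdinj (by rw [← hsdeg ⟨j, i⟩, ← hsdeg ⟨j', i'⟩, h])
    subst hj
    have : i = i' := (eM j).injective (Subtype.ext h)
    rw [this]
  have hcnorm2 : ∀ a, (‖c (sIdx a)‖^2 : ℝ) = C (d a.1) * mlt (sIdx a) := by
    intro a
    rw [hclen, hsdeg a, if_pos (hdm a.1)]
  have hcnorm : ∀ a, ‖c (sIdx a)‖ = Real.sqrt (C (d a.1) * mlt (sIdx a)) := by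
    intro a
    rw [← hcnorm2 a, Real.sqrt_sq (norm_nonneg _)]
  have hcpos : ∀ a, (0:ℝ) < ‖c (sIdx a)‖ := by
    intro a
    have h2 : (0:ℝ) < ‖c (sIdx a)‖^2 := by
      rw [hcnorm2 a]; exact mul_pos (hdpos a.1) (hmltpos _)
    nlinarith [norm_nonneg (c (sIdx a))]
  -- orthonormal family
  set u : (Σ j : Fin k, Fin (ℓ j)) → EuclideanSpace ℂ (Fin N) :=
    fun a => ((‖c (sIdx a)‖ : ℂ))⁻¹ • c (sIdx a) with hu
  have huorth : Orthonormal ℂ u := by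
    rw [orthonormal_iff_ite]
    intro a b
    by_cases hab : a = b
    · subst hab
      rw [if_pos rfl, hu]
      simp only [inner_smul_left, inner_smul_right]
      rw [inner_self_eq_norm_sq_to_K]
      rw [map_inv₀, Complex.conj_ofReal]
      have hne : ((‖c (sIdx a)‖ : ℝ) : ℂ) ≠ 0 := by
        exact_mod_cast (hcpos a).ne'
      field_simp
      ring
      rfl
    · rw [if_neg hab, hu]
      simp only [inner_smul_left, inner_smul_right]
      rw [horth _ _ (fun hc => hab (hsinj hc))]
      ring
  -- cardinality and embedding
  have hcard : Fintype.card (Σ j : Fin k, Fin (ℓ j)) ≤ N := by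
    have h1 := huorth.linearIndependent.fintype_card_le_finrank
    rwa [finrank_euclideanSpace_fin] at h1
  obtain ⟨e0⟩ : Nonempty ((Σ j : Fin k, Fin (ℓ j)) ↪ Fin N) :=
    Function.Embedding.nonempty_of_card_le (by simpa using hcard)
  -- extension to an orthonormal basis
  set v : Fin N → EuclideanSpace ℂ (Fin N) :=
    fun i => if h : ∃ a, e0 a = i then u h.choose else 0 with hv
  have hve : ∀ a, v (e0 a) = u a := by
    intro a
    rw [hv]
    simp only []
    rw [dif_pos ⟨a, rfl⟩]
    exact congrArg u (e0.injective (⟨a, rfl⟩ : ∃ a', e0 a' = e0 a).choose_spec)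
  have hrestrict : Orthonormal ℂ ((Set.range e0).restrict v) := by
    rw [orthonormal_iff_ite]
    rintro ⟨x, a, rfl⟩ ⟨y, b, rfl⟩
    show inner ℂ (v (e0 a)) (v (e0 b)) = _
    rw [hve a, hve b]
    have := orthonormal_iff_ite.mp huorth a b
    rw [this]
    by_cases hab : a = b
    · subst hab; simp
    · rw [if_neg hab, if_neg]
      intro hcon
      apply hab
      exact e0.injective (congrArg Subtype.val hcon)
  obtain ⟨b, hb⟩ := hrestrict.exists_orthonormalBasis_extension_of_card_eq
    (by simp [finrank_euclideanSpace_fin])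
  have hbe : ∀ a, b (e0 a) = u a := fun a => (hb _ ⟨a, rfl⟩).trans (hve a)
  -- the unitary matrix
  set U : Matrix (Fin N) (Fin N) ℂ := Matrix.of (fun r i => b i r) with hUdef
  have hU : U ∈ Matrix.unitaryGroup (Fin N) ℂ := by
    rw [Matrix.mem_unitaryGroup_iff']
    ext j j'
    rw [Matrix.mul_apply, Matrix.one_apply]
    have hon := orthonormal_iff_ite.mp b.orthonormal j j'
    rw [← hon, PiLp.inner_apply]
    apply Finset.sum_congr rfl
    intro i _
    rw [Matrix.star_apply, RCLike.inner_apply]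
    exact mul_comm _ _
  -- the homogeneous maps
  set H : (j : Fin k) → Fin (ℓ j) → MvPolynomial (Fin n) ℂ :=
    fun j i => monomial ((eM j i : _) : Fin n →₀ ℕ)
      ((Real.sqrt (C (d j) * mlt ((eM j i : _))) : ℂ)) with hH
  have hHhom : ∀ (j : Fin k) (i : Fin (ℓ j)), (H j i).IsHomogeneous (d j) := by
    intro j i
    exact isHomogeneous_monomial _ (mem_Mons_degree (eM j i).2)
  -- norm identity for H
  have hHnorm : ∀ (j : Fin k) (z : EuclideanSpace ℂ (Fin n)),
      ‖evalPoly (H j) z‖ ^ 2 = C (d j) * ‖z‖ ^ (2 * d j) := by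
    intro j z
    rw [EuclideanSpace.norm_eq, Real.sq_sqrt (Finset.sum_nonneg fun i _ => sq_nonneg _)]
    have hterm : ∀ i : Fin (ℓ j),
        ‖evalPoly (H j) z i‖^2 = C (d j) * (mlt ((eM j i : _)) *
          ∏ t ∈ ((eM j i : _) : Fin n →₀ ℕ).support, (‖z t‖^2) ^ (((eM j i : _) : Fin n →₀ ℕ) t)) := by
      intro i
      show ‖eval (fun t => z t) (H j i)‖^2 = _
      rw [hH]
      rw [eval_monomial, norm_mul, mul_pow, Complex.norm_real,
        Real.norm_eq_abs, abs_of_nonneg (Real.sqrt_nonneg _),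
        Real.sq_sqrt (mul_nonneg (hC0 _) (le_of_lt (hmltpos _))), mul_assoc]
      congr 1
      rw [Finsupp.prod, norm_prod, ← Finset.prod_pow]
      congr 1
      exact Finset.prod_congr rfl fun t _ => by
        rw [norm_pow, ← pow_mul, ← pow_mul, Nat.mul_comm]
    have hz2 : ‖z‖^2 = ∑ t, ‖z t‖^2 := by
      rw [EuclideanSpace.norm_eq, Real.sq_sqrt (Finset.sum_nonneg fun i _ => sq_nonneg _)]
    set g : (Fin n →₀ ℕ) → ℝ := fun s' =>
      ((coeff s' (MsumN n ^ (d j)) : ℕ) : ℝ) * ∏ t ∈ s'.support, (‖z t‖^2)^(s' t) with hg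
    have hterm2 : ∀ i : Fin (ℓ j), ‖evalPoly (H j) z i‖^2 = C (d j) * g ((eM j i : _)) := by
      intro i
      have hmm : mlt ((eM j i : _)) = ((coeff ((eM j i : _) : Fin n →₀ ℕ) (MsumN n ^ (d j)) : ℕ) : ℝ) := by
        simp only [hmlt]
        rw [mem_Mons_degree (eM j i).2]
      rw [hterm i, hg, hmm]
    rw [Finset.sum_congr rfl (fun i _ => hterm2 i), ← Finset.mul_sum]
    rw [Equiv.sum_comp (eM j) (fun x => g (x : Fin n →₀ ℕ))]
    rw [Finset.sum_coe_sort (Mons n (d j)) g]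
    rw [hg]
    rw [multinomial_eval n (d j) (fun t => ‖z t‖^2)]
    rw [pow_mul, hz2]
  -- the final evaluation identity
  have hfinal : ∀ z : EuclideanSpace ℂ (Fin n),
      (fun i => evalPoly f z i) =
        U.mulVec (fun i =>
          if h : ∃ s : Σ j : Fin k, Fin (ℓ j), (fun a => e0 a) s = i then
            evalPoly (H h.choose.1) z h.choose.2
          else 0) := by
    intro z
    funext r
    set x : Fin N → ℂ := fun i =>
      if h : ∃ s : Σ j : Fin k, Fin (ℓ j), (fun a => e0 a) s = i then
        evalPoly (H h.choose.1) z h.choose.2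
      else 0 with hx
    have hxe : ∀ a, x (e0 a) = eval (fun t => z t) (H a.1 a.2) := by
      intro a
      rw [hx]
      simp only []
      rw [dif_pos ⟨a, rfl⟩]
      have hch : (⟨a, rfl⟩ : ∃ s' : Σ j : Fin k, Fin (ℓ j), (fun a => e0 a) s' = e0 a).choose = a :=
        e0.injective (⟨a, rfl⟩ : ∃ s' : Σ j : Fin k, Fin (ℓ j), (fun a => e0 a) s' = e0 a).choose_spec
      rw [hch]
      rfl
    have hx0 : ∀ i, (∀ a, e0 a ≠ i) → x i = 0 := by
      intro i hi
      rw [hx]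
      simp only []
      rw [dif_neg]
      rintro ⟨a, ha⟩
      exact hi a ha
    show evalPoly f z r = ∑ i, U r i * x i
    have hsplit : ∑ i, U r i * x i = ∑ a : (Σ j : Fin k, Fin (ℓ j)), U r (e0 a) * x (e0 a) := by
      rw [← Finset.sum_image (g := fun a => e0 a)
        (f := fun i => U r i * x i) (fun a _ b _ h => e0.injective h)]
      apply (Finset.sum_subset (Finset.subset_univ _) _).symm
      intro i _ hni
      have : ∀ a, e0 a ≠ i := fun a ha => hni (Finset.mem_image.mpr ⟨a, Finset.mem_univ a, ha⟩)
      rw [hx0 i this, mul_zero]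
    rw [hsplit]
    have hUa : ∀ a, U r (e0 a) = ((‖c (sIdx a)‖ : ℂ))⁻¹ * c (sIdx a) r := by
      intro a
      show b (e0 a) r = _
      rw [hbe a, hu]
      rfl
    have hterm : ∀ a : (Σ j : Fin k, Fin (ℓ j)), U r (e0 a) * x (e0 a) =
        coeff (sIdx a) (f r) * ∏ t ∈ (sIdx a).support, (z t) ^ (sIdx a) t := by
      intro a
      rw [hUa a, hxe a, hH, eval_monomial]
      have hnz : ((‖c (sIdx a)‖ : ℝ) : ℂ) ≠ 0 := by exact_mod_cast (hcpos a).ne'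
      have hsqrt : ((Real.sqrt (C (d a.1) * mlt ((eM a.1 a.2 : _))) : ℝ) : ℂ) =
          ((‖c (sIdx a)‖ : ℝ) : ℂ) := by
        rw [hcnorm a]
      rw [hsqrt]
      have hprod : (Finsupp.prod (sIdx a) fun t e => (fun t => z t) t ^ e) =
          ∏ t ∈ (sIdx a).support, (z t) ^ (sIdx a) t := rfl
      rw [show ((eM a.1 a.2 : _) : Fin n →₀ ℕ) = sIdx a from rfl, hprod]
      have hcr : c (sIdx a) r = coeff (sIdx a) (f r) := rfl
      rw [hcr]
      field_simp
    rw [Finset.sum_congr rfl (fun a _ => hterm a)]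
    -- now compare with eval of f r
    set T : Finset (Fin n →₀ ℕ) := D.biUnion (fun dd => Mons n dd) with hT
    set F : (Fin n →₀ ℕ) → ℂ := fun s' => coeff s' (f r) * ∏ t ∈ s'.support, (z t) ^ (s' t) with hF
    have hc0 : ∀ s', s' ∉ T → coeff s' (f r) = 0 := by
      intro s' hs'
      have hnd : s'.degree ∉ D := by
        intro hd'
        exact hs' (Finset.mem_biUnion.mpr ⟨s'.degree, hd', self_mem_Mons s'⟩)
      have hzero : (‖c s'‖^2 : ℝ) = 0 := by
        rw [hclen s']
        by_cases hdm' : s'.degree ≤ m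
        · have : ¬ (0 < C s'.degree) := by
            intro hpos
            exact hnd (Finset.mem_filter.mpr ⟨Finset.mem_range.mpr (Nat.lt_succ_of_le hdm'), hpos⟩)
          have hCz : C s'.degree = 0 := le_antisymm (not_lt.mp this) (hC0 _)
          rw [if_pos hdm', hCz, zero_mul]
        · rw [if_neg hdm']
      have : c s' = 0 := by
        have := (pow_eq_zero_iff (two_ne_zero)).mp hzero
        exact norm_eq_zero.mp this
      have : c s' r = 0 := by rw [this]; rfl
      exact this
    have hstep1 : ∑ a : (Σ j : Fin k, Fin (ℓ j)), F (sIdx a) = ∑ s' ∈ T, F s' := by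
      apply Finset.sum_bij (fun a _ => sIdx a)
      · intro a _
        exact Finset.mem_biUnion.mpr ⟨d a.1, hdD a.1, hsmem a⟩
      · intro a _ b _ h
        exact hsinj h
      · intro s' hs'
        obtain ⟨dd, hdd, hsm⟩ := Finset.mem_biUnion.mp hs'
        refine ⟨⟨eD.symm ⟨dd, hdd⟩, (eM (eD.symm ⟨dd, hdd⟩)).symm ⟨s', ?_⟩⟩, Finset.mem_univ _, ?_⟩
        · have : d (eD.symm ⟨dd, hdd⟩) = dd := by
            rw [hd]
            simp
          rw [this]
          exact hsm
        · show sIdx _ = s'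
          simp only [hsIdx]
          simp
      · intro a _
        rfl
    have hstep2 : ∑ s' ∈ T, F s' = eval (fun t => z t) (f r) := by
      have hTU : ∑ s' ∈ T, F s' = ∑ s' ∈ T ∪ (f r).support, F s' :=
        Finset.sum_subset Finset.subset_union_left (fun s' _ hnot => by
          simp only [hF]
          rw [hc0 s' hnot, zero_mul])
      have hSU : ∑ s' ∈ (f r).support,
          (coeff s' (f r) * ∏ t ∈ s'.support, (z t) ^ (s' t)) = ∑ s' ∈ T ∪ (f r).support, F s' :=
        Finset.sum_subset Finset.subset_union_right (fun s' _ hnot => by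
          simp only [hF]
          rw [notMem_support_iff.mp hnot, zero_mul])
      rw [eval_eq, hTU, ← hSU]
    have hrfl : (∑ a : (Σ j : Fin k, Fin (ℓ j)),
        coeff (sIdx a) (f r) * ∏ t ∈ (sIdx a).support, (z t) ^ ((sIdx a) t)) =
        ∑ a : (Σ j : Fin k, Fin (ℓ j)), F (sIdx a) := rfl
    rw [hrfl, hstep1, hstep2]
    rfl
  exact ⟨U, hU, k, ℓ, d, H, (fun a => e0 a), e0.injective, hHhom, hHnorm, hfinal⟩
end

section
/- Let n ≥ 2. There is no proper holomorphic map f : ℂⁿ ∖ closure(𝔹ₙ) → 𝔹_N ∖ closure(B_R(C)), where B_R(C) is a ball in ℂᴺ with B_R(C) ∩ 𝔹_N ≠ ∅. -/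
/-!
Since `n ≥ 2`, the complement of the closed unit ball contains a whole complex line
`t ↦ a + t • v`. Restricted to it, `f` is a bounded entire map, hence constant by Liouville.
So one point fibre of `f` contains the line and is unbounded, which properness forbids.
-/

open MvPolynomial Metric

def ProperOn {α β : Type*} [TopologicalSpace α] [TopologicalSpace β]
    (f : α → β) (S : Set α) (T : Set β) : Prop :=
  Set.MapsTo f S T ∧ ∀ K : Set β, K ⊆ T → IsCompact K → IsCompact (S ∩ f ⁻¹' K)

open Bornology Set

theorem not_isBounded_range_add_smul {𝕜 E : Type*} [NontriviallyNormedField 𝕜]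
    [NormedAddCommGroup E] [NormedSpace 𝕜 E] (a : E) {v : E} (hv : v ≠ 0) :
    ¬ IsBounded (range fun t : 𝕜 => a + t • v) := by
  intro h
  obtain ⟨C, hC⟩ := isBounded_iff_forall_norm_le.1 h
  obtain ⟨t, ht⟩ := NormedField.exists_lt_norm 𝕜 ((C + ‖a‖) / ‖v‖)
  have hvpos : 0 < ‖v‖ := norm_pos_iff.2 hv
  have : ‖t‖ * ‖v‖ ≤ C + ‖a‖ :=
    calc ‖t‖ * ‖v‖ = ‖(a + t • v) - a‖ := by rw [add_sub_cancel_left, norm_smul]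
      _ ≤ ‖a + t • v‖ + ‖a‖ := norm_sub_le _ _
      _ ≤ C + ‖a‖ := by gcongr; exact hC _ ⟨t, rfl⟩
  rw [div_lt_iff₀ hvpos] at ht
  linarith

theorem norm_le_norm_add_smul_of_inner_eq_zero {𝕜 E : Type*} [RCLike 𝕜]
    [NormedAddCommGroup E] [InnerProductSpace 𝕜 E] {a v : E} (h : inner 𝕜 a v = 0)
    (t : 𝕜) :
    ‖a‖ ≤ ‖a + t • v‖ := by
  have hperp : inner 𝕜 a (t • v) = 0 := by rw [inner_smul_right, h, mul_zero]
  have := norm_add_sq_eq_norm_sq_add_norm_sq_of_inner_eq_zero a (t • v) hperp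
  nlinarith [norm_nonneg a, norm_nonneg (a + t • v), sq_nonneg ‖t • v‖]

theorem EuclideanSpace.exists_forall_lt_norm_add_smul {𝕜 ι : Type*} [RCLike 𝕜] [Fintype ι]
    [Nontrivial ι] (r : ℝ) :
    ∃ a v : EuclideanSpace 𝕜 ι, v ≠ 0 ∧ ∀ t : 𝕜, r < ‖a + t • v‖ := by
  classical
  obtain ⟨i, j, hij⟩ := exists_pair_ne ι
  refine ⟨single i ((r + 1 : ℝ) : 𝕜), single j 1, by simp, fun t => ?_⟩
  have hperp : inner 𝕜 (single i ((r + 1 : ℝ) : 𝕜)) (single j (1 : 𝕜)) = 0 := by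
    simp [EuclideanSpace.inner_single_left, hij]
  calc r < |r + 1| := by linarith [le_abs_self (r + 1)]
    _ = ‖single i ((r + 1 : ℝ) : 𝕜)‖ := by rw [PiLp.norm_single, RCLike.norm_ofReal]
    _ ≤ _ := norm_le_norm_add_smul_of_inner_eq_zero hperp t

theorem DifferentiableOn.apply_add_smul_eq_of_isBounded_image {E F : Type*}
    [NormedAddCommGroup E] [NormedSpace ℂ E] [NormedAddCommGroup F] [NormedSpace ℂ F]
    {f : E → F} {U : Set E} (hf : DifferentiableOn ℂ f U) (hU : IsOpen U)
    (hbdd : IsBounded (f '' U)) {a v : E} (hline : ∀ t : ℂ, a + t • v ∈ U) (t : ℂ) :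
    f (a + t • v) = f a := by
  have hg : Differentiable ℂ fun t : ℂ => f (a + t • v) := fun t =>
    (hf.differentiableAt (hU.mem_nhds (hline t))).comp t (by fun_prop)
  have hg_bdd : IsBounded (range fun t : ℂ => f (a + t • v)) :=
    hbdd.subset (range_subset_iff.2 fun t => mem_image_of_mem f (hline t))
  simpa using hg.apply_eq_apply_of_bounded hg_bdd t 0

theorem no_proper_complement_to_difference_general {n N : ℕ} (hn : 2 ≤ n)
    (Cc : EuclideanSpace ℂ (Fin N)) (R : ℝ) :
    ¬ ∃ f : EuclideanSpace ℂ (Fin n) → EuclideanSpace ℂ (Fin N),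
      DifferentiableOn ℂ f {z : EuclideanSpace ℂ (Fin n) | 1 < ‖z‖} ∧
      ProperOn f {z : EuclideanSpace ℂ (Fin n) | 1 < ‖z‖}
        (ball (0 : EuclideanSpace ℂ (Fin N)) 1 \ closedBall Cc R) := by
  rintro ⟨f, hf, hmaps, hproper⟩
  have : Nontrivial (Fin n) := Fin.nontrivial_iff_two_le.2 hn
  obtain ⟨a, v, hv, hline⟩ :=
    EuclideanSpace.exists_forall_lt_norm_add_smul (𝕜 := ℂ) (ι := Fin n) 1
  have hconst := hf.apply_add_smul_eq_of_isBounded_image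
    (isOpen_lt continuous_const continuous_norm)
    (isBounded_ball.subset (hmaps.mono_right sdiff_subset).image_subset) hline
  have ha : 1 < ‖a‖ := by simpa using hline 0
  have hfibre := hproper {f a} (singleton_subset_iff.2 (hmaps ha)) isCompact_singleton
  refine not_isBounded_range_add_smul (𝕜 := ℂ) a hv (hfibre.isBounded.subset ?_)
  rintro _ ⟨t, rfl⟩
  exact ⟨hline t, hconst t⟩

/-- for `n ≥ 2` there is no proper holomorphic map from the
complement of the closed unit ball in `ℂⁿ` to a ball difference
`𝔹_N ∖ closure(B_R(C))` with `B_R(C) ∩ 𝔹_N ≠ ∅`. -/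
theorem no_proper_complement_to_difference {n N : ℕ} (hn : 2 ≤ n)
    (Cc : EuclideanSpace ℂ (Fin N)) (R : ℝ) (hR : 0 < R)
    (hint : (ball Cc R ∩ ball (0 : EuclideanSpace ℂ (Fin N)) 1).Nonempty) :
    ¬ ∃ f : EuclideanSpace ℂ (Fin n) → EuclideanSpace ℂ (Fin N),
      DifferentiableOn ℂ f {z : EuclideanSpace ℂ (Fin n) | 1 < ‖z‖} ∧
      ProperOn f {z : EuclideanSpace ℂ (Fin n) | 1 < ‖z‖}
        (ball (0 : EuclideanSpace ℂ (Fin N)) 1 \ closedBall Cc R) :=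
  no_proper_complement_to_difference_general hn Cc R
end

section
/- Let n ≥ 2 and let f : 𝔹ₙ ∖ closure(B_r(c)) → 𝔹_N ∖ closure(B_R(C)) be a proper holomorphic map, where B_r(c) ∩ 𝔹ₙ ≠ ∅ and B_R(C) ∩ 𝔹_N ≠ ∅, and assume f extends to a rational proper map F : 𝔹ₙ → 𝔹_N (as guaranteed by Forstnerič's theorem). Then F maps (∂B_r(c)) ∩ 𝔹ₙ into (∂B_R(C)) ∩ 𝔹_N, and conversely, any rational proper map F : 𝔹ₙ → 𝔹_N holomorphic on a neighborhood of closure(B_r(c)) taking (∂B_r(c)) ∩ 𝔹ₙ into (∂B_R(C)) ∩ 𝔹_N restricts to a proper map of 𝔹ₙ ∖ closure(B_r(c)) to 𝔹_N ∖ closure(B_R(C)). -/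
open MvPolynomial Metric

noncomputable section AuxBallDiff

/-- reflect eval formula -/
lemma eval_reflect' {D : ℕ} {f : Polynomial ℂ} (hf : f.natDegree ≤ D) {x : ℂ} (hx : x ≠ 0) :
    (Polynomial.reflect D f).eval x = x ^ D * f.eval x⁻¹ := by
  have hdeg : (Polynomial.reflect D f).natDegree ≤ D := by
    rw [Polynomial.natDegree_le_iff_coeff_eq_zero]
    intro m hm
    rw [Polynomial.coeff_reflect, Polynomial.revAt_eq_self_of_lt hm]
    exact Polynomial.coeff_eq_zero_of_natDegree_lt (lt_of_le_of_lt hf hm)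
  rw [Polynomial.eval_eq_sum_range' (lt_of_le_of_lt hdeg (Nat.lt_succ_self D)),
    Polynomial.eval_eq_sum_range' (lt_of_le_of_lt hf (Nat.lt_succ_self D))]
  simp only [Polynomial.coeff_reflect]
  rw [Finset.mul_sum]
  rw [← Finset.sum_range_reflect]
  apply Finset.sum_congr rfl
  intro i hi
  rw [Finset.mem_range] at hi
  have hi' : i ≤ D := Nat.lt_succ_iff.mp hi
  have h1 : D + 1 - 1 - i = D - i := by omega
  rw [h1, Polynomial.revAt_le (by omega : D - i ≤ D)]
  have h2 : D - (D - i) = i := by omega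
  rw [h2]
  rw [inv_pow, ← div_eq_mul_inv, mul_div_assoc']
  rw [eq_div_iff (pow_ne_zero _ hx), mul_assoc, ← pow_add, mul_comm (x ^ D) (f.coeff i)]
  congr 2
  omega

/-- conjugate-map eval -/
lemma eval_map_conj_s19 (f : Polynomial ℂ) (w : ℂ) :
    (f.map (starRingEnd ℂ)).eval ((starRingEnd ℂ) w) = (starRingEnd ℂ) (f.eval w) := by
  rw [Polynomial.eval_map, Polynomial.eval₂_hom]

lemma analyticAt_mv {n : ℕ} (Q : MvPolynomial (Fin n) ℂ) (z : EuclideanSpace ℂ (Fin n)) :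
    AnalyticAt ℂ (fun z : EuclideanSpace ℂ (Fin n) => MvPolynomial.eval (fun j => z j) Q) z := by
  induction Q using MvPolynomial.induction_on with
  | C a => simpa using analyticAt_const
  | add p q hp hq => simp only [MvPolynomial.eval_add]; exact hp.add hq
  | mul_X p j hp =>
      simp only [MvPolynomial.eval_mul, MvPolynomial.eval_X]
      exact hp.mul ((EuclideanSpace.proj j : EuclideanSpace ℂ (Fin n) →L[ℂ] ℂ).analyticAt z)

lemma analyticAt_evalPoly {n N : ℕ} (P : Fin N → MvPolynomial (Fin n) ℂ)
    (z : EuclideanSpace ℂ (Fin n)) : AnalyticAt ℂ (evalPoly P) z := by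
  have h : evalPoly P = fun z =>
      (PiLp.continuousLinearEquiv 2 ℂ (fun _ : Fin N => ℂ)).symm
        (fun i => MvPolynomial.eval (fun j => z j) (P i)) := rfl
  rw [h]
  apply ((PiLp.continuousLinearEquiv 2 ℂ (fun _ : Fin N => ℂ)).symm.toContinuousLinearMap.analyticAt
    _).comp
  exact AnalyticAt.pi fun i => analyticAt_mv (P i) z

lemma analyticAt_ratMap {n N : ℕ} (P : Fin N → MvPolynomial (Fin n) ℂ)
    (q : MvPolynomial (Fin n) ℂ) {z : EuclideanSpace ℂ (Fin n)}
    (hz : MvPolynomial.eval (fun j => z j) q ≠ 0) : AnalyticAt ℂ (ratMap P q) z :=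
  ((analyticAt_mv q z).inv hz).smul (analyticAt_evalPoly P z)

/-- one-variable polynomials parametrizing a complex line -/
def linePoly {n : ℕ} (p v : EuclideanSpace ℂ (Fin n)) : Fin n → Polynomial ℂ :=
  fun j => Polynomial.C (p j) + Polynomial.C (v j) * Polynomial.X

lemma eval_linePoly {n : ℕ} (Q : MvPolynomial (Fin n) ℂ) (p v : EuclideanSpace ℂ (Fin n))
    (t : ℂ) :
    (MvPolynomial.aeval (linePoly p v) Q).eval t
      = MvPolynomial.eval (fun j => (p + t • v) j) Q := by
  have h1 : (Polynomial.aeval t : Polynomial ℂ →ₐ[ℂ] ℂ) ((MvPolynomial.aeval (linePoly p v)) Q)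
      = (MvPolynomial.aeval (fun j => (Polynomial.aeval t : Polynomial ℂ →ₐ[ℂ] ℂ)
          (linePoly p v j))) Q := by
    rw [← MvPolynomial.comp_aeval]
    rfl
  have h2 : ∀ j, (Polynomial.aeval t : Polynomial ℂ →ₐ[ℂ] ℂ) (linePoly p v j)
      = (p + t • v) j := by
    intro j
    simp [linePoly, PiLp.add_apply, PiLp.smul_apply, smul_eq_mul]
    ring
  calc (MvPolynomial.aeval (linePoly p v) Q).eval t
      = (Polynomial.aeval t : Polynomial ℂ →ₐ[ℂ] ℂ) ((MvPolynomial.aeval (linePoly p v)) Q) := by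
        rw [Polynomial.coe_aeval_eq_eval]
    _ = (MvPolynomial.aeval (fun j => (Polynomial.aeval t : Polynomial ℂ →ₐ[ℂ] ℂ)
          (linePoly p v j))) Q := h1
    _ = MvPolynomial.eval (fun j => (p + t • v) j) Q := by
        simp only [h2]
        rw [← MvPolynomial.coe_aeval_eq_eval]
        rfl

/-- reflection of a polynomial across the circle of radius ρ -/
def reflPoly (D : ℕ) (ρ : ℝ) (f : Polynomial ℂ) : Polynomial ℂ :=
  Polynomial.reflect D ((f.map (starRingEnd ℂ)).comp (Polynomial.C ((ρ : ℂ)^2) * Polynomial.X))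

lemma eval_reflPoly {D : ℕ} (ρ : ℝ) {f : Polynomial ℂ} (hf : f.natDegree ≤ D) {x : ℂ}
    (hx : x ≠ 0) :
    (reflPoly D ρ f).eval x
      = x ^ D * (starRingEnd ℂ) (f.eval ((ρ : ℂ)^2 / (starRingEnd ℂ) x)) := by
  have hd : ((f.map (starRingEnd ℂ)).comp
      (Polynomial.C ((ρ : ℂ)^2) * Polynomial.X)).natDegree ≤ D := by
    refine le_trans Polynomial.natDegree_comp_le ?_
    have h1 : (Polynomial.C ((ρ : ℂ)^2) * Polynomial.X).natDegree ≤ 1 :=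
      le_trans (Polynomial.natDegree_C_mul_le _ _) (by simp)
    have h2 : (f.map (starRingEnd ℂ)).natDegree ≤ D :=
      le_trans Polynomial.natDegree_map_le hf
    calc (f.map (starRingEnd ℂ)).natDegree * (Polynomial.C ((ρ : ℂ)^2) * Polynomial.X).natDegree
        ≤ D * 1 := Nat.mul_le_mul h2 h1
      _ = D := by ring
  rw [reflPoly, eval_reflect' hd hx, Polynomial.eval_comp]
  congr 1
  simp only [Polynomial.eval_mul, Polynomial.eval_C, Polynomial.eval_X]
  have h3 : (ρ : ℂ)^2 * x⁻¹ = (starRingEnd ℂ) ((ρ : ℂ)^2 / (starRingEnd ℂ) x) := by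
    rw [map_div₀, map_pow, Complex.conj_conj, Complex.conj_ofReal, div_eq_mul_inv]
  rw [h3, eval_map_conj_s19]

variable {n N : ℕ} (P : Fin N → MvPolynomial (Fin n) ℂ) (q : MvPolynomial (Fin n) ℂ)
  (Cc : EuclideanSpace ℂ (Fin N)) (p v : EuclideanSpace ℂ (Fin n))

def bpoly : Polynomial ℂ := MvPolynomial.aeval (linePoly p v) q

def Apoly (i : Fin N) : Polynomial ℂ :=
  MvPolynomial.aeval (linePoly p v) (P i) - Polynomial.C (Cc i) * bpoly q p v

def Dbound : ℕ :=
  max (Finset.univ.sup fun i => (Apoly P q Cc p v i).natDegree) (bpoly q p v).natDegree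

lemma Apoly_deg_le (i : Fin N) : (Apoly P q Cc p v i).natDegree ≤ Dbound P q Cc p v := by
  unfold Dbound
  exact le_trans (Finset.le_sup (f := fun i => (Apoly P q Cc p v i).natDegree)
    (Finset.mem_univ i)) le_sup_left

lemma bpoly_deg_le : (bpoly q p v).natDegree ≤ Dbound P q Cc p v := by
  unfold Dbound; exact le_max_right _ _

/-- the numerator vector -/
def wvec (t : ℂ) : EuclideanSpace ℂ (Fin N) := WithLp.toLp 2 (fun i => (Apoly P q Cc p v i).eval t)

lemma bpoly_eval (t : ℂ) :
    (bpoly q p v).eval t = MvPolynomial.eval (fun j => (p + t • v) j) q :=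
  eval_linePoly q p v t

lemma wvec_eq (t : ℂ) (hb : (bpoly q p v).eval t ≠ 0) :
    wvec P q Cc p v t = ((bpoly q p v).eval t) • (ratMap P q (p + t • v) - Cc) := by
  ext i
  have hrhs : (((bpoly q p v).eval t) • (ratMap P q (p + t • v) - Cc)) i
      = ((bpoly q p v).eval t) * ((ratMap P q (p + t • v)) i - Cc i) := by
    simp [PiLp.smul_apply, PiLp.sub_apply, smul_eq_mul]
  have hrat : (ratMap P q (p + t • v)) i
      = (MvPolynomial.eval (fun j => (p + t • v) j) q)⁻¹
          * MvPolynomial.eval (fun j => (p + t • v) j) (P i) := by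
    simp [ratMap, PiLp.smul_apply, smul_eq_mul, evalPoly]
  have hb' : MvPolynomial.eval (fun j => (p + t • v) j) q ≠ 0 := by
    rw [← bpoly_eval]; exact hb
  show (Apoly P q Cc p v i).eval t = _
  rw [hrhs, hrat]
  simp only [Apoly, Polynomial.eval_sub, Polynomial.eval_mul, Polynomial.eval_C,
    eval_linePoly, bpoly_eval]
  simp only [PiLp.add_apply, PiLp.smul_apply, smul_eq_mul] at hb' ⊢
  field_simp

lemma norm_wvec (t : ℂ) (hb : (bpoly q p v).eval t ≠ 0) :
    ‖wvec P q Cc p v t‖ = ‖(bpoly q p v).eval t‖ * ‖ratMap P q (p + t • v) - Cc‖ := by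
  rw [wvec_eq P q Cc p v t hb, norm_smul]

lemma inner_wvec (s t : ℂ) :
    (inner ℂ (wvec P q Cc p v s) (wvec P q Cc p v t) : ℂ)
      = ∑ i, (Apoly P q Cc p v i).eval t * (starRingEnd ℂ) ((Apoly P q Cc p v i).eval s) := by
  rw [PiLp.inner_apply]
  apply Finset.sum_congr rfl
  intro i _
  rw [RCLike.inner_apply]
  simp [wvec]

lemma mul_conj_eq_normSq (z : ℂ) :
    z * (starRingEnd ℂ) z = ((‖z‖^2 : ℝ) : ℂ) := by
  rw [Complex.mul_conj]
  norm_cast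
  rw [Complex.normSq_eq_norm_sq]

lemma circle_identity {ρ R : ℝ} (hρ : 0 < ρ)
    (hinf : {t : ℂ | ‖t‖ = ρ ∧ (bpoly q p v).eval t ≠ 0 ∧
        ‖ratMap P q (p + t • v) - Cc‖ = R}.Infinite) :
    (∑ i, Apoly P q Cc p v i * reflPoly (Dbound P q Cc p v) ρ (Apoly P q Cc p v i))
      = Polynomial.C ((R : ℂ)^2)
          * (bpoly q p v * reflPoly (Dbound P q Cc p v) ρ (bpoly q p v)) := by
  apply Polynomial.eq_of_infinite_eval_eq
  apply hinf.mono
  rintro t ⟨ht, hb, hRt⟩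
  have ht0 : t ≠ 0 := by
    intro h; rw [h, norm_zero] at ht; exact (ne_of_gt hρ) ht.symm
  have hct0 : (starRingEnd ℂ) t ≠ 0 := by simpa using ht0
  have hmc : t * (starRingEnd ℂ) t = ((ρ : ℂ))^2 := by
    rw [mul_conj_eq_normSq, ht]; push_cast; ring
  have hct : ((ρ : ℂ))^2 / (starRingEnd ℂ) t = t := by
    rw [div_eq_iff hct0, ← hmc]
  simp only [Set.mem_setOf_eq, Polynomial.eval_finset_sum, Polynomial.eval_mul,
    Polynomial.eval_C]
  have hA : ∀ i, (reflPoly (Dbound P q Cc p v) ρ (Apoly P q Cc p v i)).eval t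
      = t ^ (Dbound P q Cc p v) * (starRingEnd ℂ) ((Apoly P q Cc p v i).eval t) := by
    intro i; rw [eval_reflPoly ρ (Apoly_deg_le P q Cc p v i) ht0, hct]
  have hB : (reflPoly (Dbound P q Cc p v) ρ (bpoly q p v)).eval t
      = t ^ (Dbound P q Cc p v) * (starRingEnd ℂ) ((bpoly q p v).eval t) := by
    rw [eval_reflPoly ρ (bpoly_deg_le P q Cc p v) ht0, hct]
  simp only [hA, hB]
  have key : ∑ i, (Apoly P q Cc p v i).eval t * (starRingEnd ℂ) ((Apoly P q Cc p v i).eval t)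
      = (((‖(bpoly q p v).eval t‖ * R)^2 : ℝ) : ℂ) := by
    have h1 : ∀ i, (Apoly P q Cc p v i).eval t * (starRingEnd ℂ) ((Apoly P q Cc p v i).eval t)
        = ((‖(Apoly P q Cc p v i).eval t‖^2 : ℝ) : ℂ) := fun i => mul_conj_eq_normSq _
    rw [Finset.sum_congr rfl (fun i _ => h1 i), ← Complex.ofReal_sum]
    congr 1
    have h2 : ∑ i, ‖(Apoly P q Cc p v i).eval t‖^2 = ‖wvec P q Cc p v t‖^2 := by
      rw [EuclideanSpace.norm_eq,
        Real.sq_sqrt (Finset.sum_nonneg fun i _ => sq_nonneg _)]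
      rfl
    rw [h2, norm_wvec P q Cc p v t hb, hRt]
  have lhs_eq : ∑ i, (Apoly P q Cc p v i).eval t
        * (t ^ (Dbound P q Cc p v) * (starRingEnd ℂ) ((Apoly P q Cc p v i).eval t))
      = t ^ (Dbound P q Cc p v)
        * ∑ i, (Apoly P q Cc p v i).eval t * (starRingEnd ℂ) ((Apoly P q Cc p v i).eval t) := by
    rw [Finset.mul_sum]; exact Finset.sum_congr rfl (fun i _ => by ring)
  rw [lhs_eq, key]
  have rhs_eq : (R : ℂ)^2 * ((bpoly q p v).eval t
        * (t ^ (Dbound P q Cc p v) * (starRingEnd ℂ) ((bpoly q p v).eval t)))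
      = (R : ℂ)^2 * t ^ (Dbound P q Cc p v)
        * ((bpoly q p v).eval t * (starRingEnd ℂ) ((bpoly q p v).eval t)) := by ring
  rw [rhs_eq, mul_conj_eq_normSq]
  push_cast
  ring

lemma identity_eval {ρ R : ℝ}
    (hid : (∑ i, Apoly P q Cc p v i * reflPoly (Dbound P q Cc p v) ρ (Apoly P q Cc p v i))
      = Polynomial.C ((R : ℂ)^2)
          * (bpoly q p v * reflPoly (Dbound P q Cc p v) ρ (bpoly q p v)))
    {t : ℂ} (ht0 : t ≠ 0) :
    ∑ i, (Apoly P q Cc p v i).eval t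
        * (starRingEnd ℂ) ((Apoly P q Cc p v i).eval ((ρ : ℂ)^2 / (starRingEnd ℂ) t))
      = (R : ℂ)^2 * ((bpoly q p v).eval t
        * (starRingEnd ℂ) ((bpoly q p v).eval ((ρ : ℂ)^2 / (starRingEnd ℂ) t))) := by
  have h := congrArg (Polynomial.eval t) hid
  simp only [Polynomial.eval_finset_sum, Polynomial.eval_mul, Polynomial.eval_C] at h
  rw [Finset.sum_congr rfl
    (fun i _ => by rw [eval_reflPoly ρ (Apoly_deg_le P q Cc p v i) ht0])] at h
  rw [eval_reflPoly ρ (bpoly_deg_le P q Cc p v) ht0] at h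
  have hL : ∑ i, (Apoly P q Cc p v i).eval t
        * (t ^ (Dbound P q Cc p v)
          * (starRingEnd ℂ) ((Apoly P q Cc p v i).eval ((ρ : ℂ)^2 / (starRingEnd ℂ) t)))
      = t ^ (Dbound P q Cc p v) * ∑ i, (Apoly P q Cc p v i).eval t
          * (starRingEnd ℂ) ((Apoly P q Cc p v i).eval ((ρ : ℂ)^2 / (starRingEnd ℂ) t)) := by
    rw [Finset.mul_sum]; exact Finset.sum_congr rfl (fun i _ => by ring)
  have hR' : (R : ℂ)^2 * ((bpoly q p v).eval t
        * (t ^ (Dbound P q Cc p v)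
          * (starRingEnd ℂ) ((bpoly q p v).eval ((ρ : ℂ)^2 / (starRingEnd ℂ) t))))
      = t ^ (Dbound P q Cc p v) * ((R : ℂ)^2 * ((bpoly q p v).eval t
          * (starRingEnd ℂ) ((bpoly q p v).eval ((ρ : ℂ)^2 / (starRingEnd ℂ) t)))) := by ring
  rw [hL, hR'] at h
  exact mul_left_cancel₀ (pow_ne_zero _ ht0) h

lemma circle_eq {ρ R : ℝ} (hρ : 0 < ρ) (hR : 0 ≤ R)
    (hinf : {t : ℂ | ‖t‖ = ρ ∧ (bpoly q p v).eval t ≠ 0 ∧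
        ‖ratMap P q (p + t • v) - Cc‖ = R}.Infinite)
    {t : ℂ} (ht : ‖t‖ = ρ) (hb : (bpoly q p v).eval t ≠ 0) :
    ‖ratMap P q (p + t • v) - Cc‖ = R := by
  have ht0 : t ≠ 0 := by
    intro h; rw [h, norm_zero] at ht; exact (ne_of_gt hρ) ht.symm
  have hct0 : (starRingEnd ℂ) t ≠ 0 := by simpa using ht0
  have hmc : t * (starRingEnd ℂ) t = ((ρ : ℂ))^2 := by
    rw [mul_conj_eq_normSq, ht]; push_cast; ring
  have hct : ((ρ : ℂ))^2 / (starRingEnd ℂ) t = t := by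
    rw [div_eq_iff hct0, ← hmc]
  have h := identity_eval P q Cc p v (circle_identity P q Cc p v hρ hinf) ht0
  rw [hct] at h
  have h1 : ∀ i, (Apoly P q Cc p v i).eval t * (starRingEnd ℂ) ((Apoly P q Cc p v i).eval t)
      = ((‖(Apoly P q Cc p v i).eval t‖^2 : ℝ) : ℂ) := fun i => mul_conj_eq_normSq _
  rw [Finset.sum_congr rfl (fun i _ => h1 i), ← Complex.ofReal_sum, mul_conj_eq_normSq] at h
  have h2 : ∑ i, ‖(Apoly P q Cc p v i).eval t‖^2 = ‖wvec P q Cc p v t‖^2 := by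
    rw [EuclideanSpace.norm_eq,
      Real.sq_sqrt (Finset.sum_nonneg fun i _ => sq_nonneg _)]
    rfl
  rw [h2, norm_wvec P q Cc p v t hb] at h
  have h3 : ((‖(bpoly q p v).eval t‖ * ‖ratMap P q (p + t • v) - Cc‖)^2 : ℝ)
      = (R^2 * ‖(bpoly q p v).eval t‖^2 : ℝ) := by
    have h' := h
    push_cast at h'
    exact_mod_cast h'
  have hbpos : (0:ℝ) < ‖(bpoly q p v).eval t‖ := norm_pos_iff.2 hb
  have hb2 : ‖(bpoly q p v).eval t‖^2 ≠ 0 := by positivity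
  have h4 : ‖ratMap P q (p + t • v) - Cc‖^2 = R^2 := by
    apply mul_left_cancel₀ hb2
    calc ‖(bpoly q p v).eval t‖^2 * ‖ratMap P q (p + t • v) - Cc‖^2
        = (‖(bpoly q p v).eval t‖ * ‖ratMap P q (p + t • v) - Cc‖)^2 := by ring
      _ = R^2 * ‖(bpoly q p v).eval t‖^2 := h3
      _ = ‖(bpoly q p v).eval t‖^2 * R^2 := by ring
  rw [← Real.sqrt_sq (norm_nonneg (ratMap P q (p + t • v) - Cc)), h4, Real.sqrt_sq hR]

lemma circle_lt {ρ R : ℝ} (hρ : 0 < ρ) (hR : 0 < R)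
    (hinf : {t : ℂ | ‖t‖ = ρ ∧ (bpoly q p v).eval t ≠ 0 ∧
        ‖ratMap P q (p + t • v) - Cc‖ = R}.Infinite)
    {t μ : ℂ} (ht0 : t ≠ 0) (hμ : μ = (ρ : ℂ)^2 / (starRingEnd ℂ) t)
    (hbt : (bpoly q p v).eval t ≠ 0) (hbμ : (bpoly q p v).eval μ ≠ 0)
    (hlt : ‖ratMap P q (p + μ • v) - Cc‖ < R) :
    R < ‖ratMap P q (p + t • v) - Cc‖ := by
  have h := identity_eval P q Cc p v (circle_identity P q Cc p v hρ hinf) ht0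
  rw [← hμ] at h
  have hIL : (inner ℂ (wvec P q Cc p v μ) (wvec P q Cc p v t) : ℂ)
      = ∑ i, (Apoly P q Cc p v i).eval t * (starRingEnd ℂ) ((Apoly P q Cc p v i).eval μ) :=
    inner_wvec P q Cc p v μ t
  rw [← hIL] at h
  have hnorm : ‖(inner ℂ (wvec P q Cc p v μ) (wvec P q Cc p v t) : ℂ)‖
      ≤ ‖wvec P q Cc p v μ‖ * ‖wvec P q Cc p v t‖ := norm_inner_le_norm _ _
  rw [h] at hnorm
  have hRHS : ‖(R : ℂ)^2 * ((bpoly q p v).eval t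
        * (starRingEnd ℂ) ((bpoly q p v).eval μ))‖
      = R^2 * (‖(bpoly q p v).eval t‖ * ‖(bpoly q p v).eval μ‖) := by
    rw [norm_mul, norm_mul, norm_pow, RCLike.norm_conj]
    congr 2
    rw [Complex.norm_real, Real.norm_eq_abs, abs_of_pos hR]
  rw [hRHS, norm_wvec P q Cc p v t hbt, norm_wvec P q Cc p v μ hbμ] at hnorm
  set X := ‖ratMap P q (p + t • v) - Cc‖ with hX
  set Y := ‖ratMap P q (p + μ • v) - Cc‖ with hY
  have hbt' : (0:ℝ) < ‖(bpoly q p v).eval t‖ := norm_pos_iff.2 hbt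
  have hbμ' : (0:ℝ) < ‖(bpoly q p v).eval μ‖ := norm_pos_iff.2 hbμ
  have hX0 : 0 ≤ X := norm_nonneg _
  have hY0 : 0 ≤ Y := norm_nonneg _
  have h7 : R^2 * (‖(bpoly q p v).eval t‖ * ‖(bpoly q p v).eval μ‖)
      ≤ X * Y * (‖(bpoly q p v).eval t‖ * ‖(bpoly q p v).eval μ‖) := by
    calc R^2 * (‖(bpoly q p v).eval t‖ * ‖(bpoly q p v).eval μ‖)
        ≤ ‖(bpoly q p v).eval μ‖ * Y * (‖(bpoly q p v).eval t‖ * X) := hnorm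
      _ = X * Y * (‖(bpoly q p v).eval t‖ * ‖(bpoly q p v).eval μ‖) := by ring
  have hkey : R^2 ≤ X * Y := le_of_mul_le_mul_right h7 (by positivity)
  by_contra hcon
  push_neg at hcon
  have h5 : X * Y ≤ R * Y := mul_le_mul_of_nonneg_right hcon hY0
  have h6 : R * Y < R * R := mul_lt_mul_of_pos_left hlt hR
  nlinarith [hkey, h5, h6]

lemma infinite_circle_inter {ρ : ℝ} (hρ : 0 < ρ) {s : Set ℂ} (hs : IsOpen s) {l : ℂ}
    (h1 : ‖l‖ = ρ) (h2 : l ∈ s) : {t : ℂ | ‖t‖ = ρ ∧ t ∈ s}.Infinite := by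
  have hl0 : l ≠ 0 := by
    intro h; rw [h, norm_zero] at h1; exact (ne_of_gt hρ) h1.symm
  have hcont : Continuous (fun θ : ℝ => l * Complex.exp ((θ : ℂ) * Complex.I)) := by
    fun_prop
  have hmem : (fun θ : ℝ => l * Complex.exp ((θ : ℂ) * Complex.I)) ⁻¹' s ∈ nhds (0 : ℝ) := by
    apply hcont.continuousAt.preimage_mem_nhds
    apply hs.mem_nhds
    simpa using h2
  rcases Metric.mem_nhds_iff.1 hmem with ⟨ε, hε, hsub⟩
  set ε' : ℝ := min ε 1 with hε'
  have hε'0 : 0 < ε' := lt_min hε one_pos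
  have hε'1 : ε' ≤ 1 := min_le_right _ _
  apply Set.infinite_of_injective_forall_mem
    (f := fun k : ℕ => l * Complex.exp (((ε' / (k + 2) : ℝ) : ℂ) * Complex.I))
  · intro a b hab
    simp only at hab
    have h3 : Complex.exp (((ε' / (a + 2) : ℝ) : ℂ) * Complex.I)
        = Complex.exp (((ε' / (b + 2) : ℝ) : ℂ) * Complex.I) := by
      exact mul_left_cancel₀ hl0 hab
    rcases Complex.exp_eq_exp_iff_exists_int.1 h3 with ⟨m, hm⟩
    have ha2 : (0:ℝ) < a + 2 := by positivity
    have hb2 : (0:ℝ) < b + 2 := by positivity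
    have hm'' : ((ε' / (a + 2) : ℝ) : ℂ) * Complex.I
        = (((ε' / (b + 2) : ℝ) : ℂ) + m * (2 * Real.pi)) * Complex.I := by
      rw [add_mul]; linear_combination hm
    have hm' := mul_right_cancel₀ Complex.I_ne_zero hm''
    have hre : (ε' / (a + 2) : ℝ) = (ε' / (b + 2) : ℝ) + m * (2 * Real.pi) := by
      exact_mod_cast hm'
    have hb1 : ε' / (b + 2) ≤ 1 := by
      rw [div_le_one hb2]; linarith
    have ha1 : ε' / (a + 2) ≤ 1 := by
      rw [div_le_one ha2]; linarith
    have ha0 : 0 < ε' / (a + 2) := by positivity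
    have hb0 : 0 < ε' / (b + 2) := by positivity
    have hpi : (3:ℝ) < Real.pi := Real.pi_gt_three
    have hm0 : m = 0 := by
      by_contra hm0
      have h1m : (1:ℝ) ≤ |(m:ℝ)| := by
        have := Int.one_le_abs (by exact_mod_cast hm0 : m ≠ 0)
        exact_mod_cast this
      have habs1 : |(m:ℝ) * (2*Real.pi)| = |(m:ℝ)| * (2*Real.pi) := by
        rw [abs_mul, abs_of_pos (by positivity : (0:ℝ) < 2*Real.pi)]
      have habs2 : |(m:ℝ) * (2*Real.pi)| < 1 := by
        rw [show (m:ℝ)*(2*Real.pi) = ε'/(a+2) - ε'/(b+2) by linarith]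
        rw [abs_lt]
        constructor <;> linarith
      nlinarith
    rw [hm0] at hre
    push_cast at hre
    have hre2 : ε' / ((a:ℝ)+2) = ε' / ((b:ℝ)+2) := by
      have : ((0:ℝ)) * (2*Real.pi) = 0 := by ring
      linarith [hre]
    have heq : ((b:ℝ)+2) = ((a:ℝ)+2) := by
      rw [div_eq_div_iff (ne_of_gt ha2) (ne_of_gt hb2)] at hre2
      exact mul_left_cancel₀ (ne_of_gt hε'0) (by linarith)
    exact_mod_cast (by linarith : (a:ℝ) = (b:ℝ))
  · intro k
    constructor
    · rw [norm_mul, h1]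
      rw [show Complex.exp (((ε' / (k + 2) : ℝ) : ℂ) * Complex.I) =
        Complex.exp ((ε' / (k + 2) : ℝ) * Complex.I) from rfl]
      have := Complex.norm_exp_ofReal_mul_I (ε' / (k + 2))
      rw [this, mul_one]
    · apply hsub
      have hk2 : (0:ℝ) < k + 2 := by positivity
      have h4 : ε' / (k + 2) < ε := by
        have : ε' / (k + 2) ≤ ε' / 2 := by
          apply div_le_div_of_nonneg_left (le_of_lt hε'0) two_pos ?_ |>.trans le_rfl
          linarith
        have h5 : ε' / 2 < ε := by
          have : ε' ≤ ε := min_le_left _ _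
          linarith
        linarith
      simp only [Metric.mem_ball, Set.mem_preimage]
      rw [Real.dist_eq, sub_zero, abs_of_pos (by positivity : (0:ℝ) < ε' / (k+2))]
      exact h4

local notation "⟪" x ", " y "⟫" => @inner ℂ _ _ x y

lemma pythagoras {n : ℕ} (a v : EuclideanSpace ℂ (Fin n)) (horth : ⟪v, a⟫ = 0) (μ : ℂ) :
    ‖a + μ • v‖^2 = ‖a‖^2 + ‖μ‖^2 * ‖v‖^2 := by
  have h := @norm_add_sq ℂ _ _ _ _ a (μ • v)
  have h2 : ⟪a, μ • v⟫ = 0 := by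
    rw [inner_smul_right]
    rw [← inner_conj_symm, horth]
    simp
  rw [h2] at h
  simp only [map_zero, mul_zero, add_zero] at h
  rw [h, norm_smul]
  ring

lemma chord_circle {n : ℕ} {c : EuclideanSpace ℂ (Fin n)} {r : ℝ} (hr : 0 < r)
    {ζ ζ' : EuclideanSpace ℂ (Fin n)} (hζ : ζ ∈ sphere c r) (hζ' : ζ' ∈ sphere c r)
    (hne : ζ ≠ ζ') :
    ∃ (p v : EuclideanSpace ℂ (Fin n)) (lh : ℂ),
      lh ≠ 0 ∧ ζ = p + lh • v ∧ ζ' = p + (lh + 1) • v ∧ ‖lh + 1‖ = ‖lh‖ ∧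
      (∀ t : ℂ, ‖t‖ = ‖lh‖ → p + t • v ∈ sphere c r) := by
  set v := ζ' - ζ with hv
  have hv0 : v ≠ 0 := sub_ne_zero.2 (Ne.symm hne)
  have hnv0 : (0:ℝ) < ‖v‖ := norm_pos_iff.2 hv0
  set lh : ℂ := ⟪v, ζ - c⟫ / ((‖v‖ : ℂ)^2) with hlh
  set p : EuclideanSpace ℂ (Fin n) := ζ - lh • v with hp
  have hζp : ζ = p + lh • v := by rw [hp]; abel
  have hζ'p : ζ' = p + (lh + 1) • v := by
    rw [hp, add_smul, one_smul]
    rw [hv]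
    abel
  have hn2 : ((‖v‖ : ℂ))^2 ≠ 0 := by
    apply pow_ne_zero
    simp only [ne_eq, Complex.ofReal_eq_zero]
    exact ne_of_gt hnv0
  have horth : ⟪v, p - c⟫ = 0 := by
    have h1 : p - c = (ζ - c) - lh • v := by rw [hp]; abel
    rw [h1, inner_sub_right, inner_smul_right, inner_self_eq_norm_sq_to_K, hlh]
    field_simp
    have hd : ∀ y : ℂ, y ≠ 0 → inner ℂ v (ζ - c) * (1 - y / y) = 0 := fun y hy => by
      rw [div_self hy, sub_self, mul_zero]
    exact hd _ hn2
  have hpyth : ∀ μ : ℂ, ‖(p - c) + μ • v‖^2 = ‖p - c‖^2 + ‖μ‖^2 * ‖v‖^2 :=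
    fun μ => pythagoras (p - c) v horth μ
  have hzsq : ∀ μ : ℂ, p + μ • v - c = (p - c) + μ • v := fun μ => by abel
  have hζsq : ‖p - c‖^2 + ‖lh‖^2 * ‖v‖^2 = r^2 := by
    rw [← hpyth lh, ← hzsq lh, ← hζp]
    rw [mem_sphere_iff_norm] at hζ
    rw [hζ]
  have hζ'sq : ‖p - c‖^2 + ‖lh + 1‖^2 * ‖v‖^2 = r^2 := by
    rw [← hpyth (lh + 1), ← hzsq (lh + 1), ← hζ'p]
    rw [mem_sphere_iff_norm] at hζ'
    rw [hζ']
  have hlh0 : lh ≠ 0 := by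
    intro h0
    rw [h0] at hζsq hζ'sq
    simp only [norm_zero, zero_add, norm_one] at hζsq hζ'sq
    nlinarith
  have hnorm_eq : ‖lh + 1‖ = ‖lh‖ := by
    have h2' : ‖lh + 1‖^2 * ‖v‖^2 = ‖lh‖^2 * ‖v‖^2 := by linarith
    have h2 : ‖lh + 1‖^2 = ‖lh‖^2 :=
      mul_right_cancel₀ (by positivity : (‖v‖:ℝ)^2 ≠ 0) h2'
    rw [← Real.sqrt_sq (norm_nonneg (lh+1)), h2, Real.sqrt_sq (norm_nonneg lh)]
  refine ⟨p, v, lh, hlh0, hζp, hζ'p, hnorm_eq, ?_⟩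
  intro t ht
  rw [mem_sphere_iff_norm, hzsq t]
  have h3 : ‖(p - c) + t • v‖^2 = r^2 := by
    rw [hpyth t, ht]
    exact hζsq
  rw [← Real.sqrt_sq (norm_nonneg ((p - c) + t • v)), h3, Real.sqrt_sq (le_of_lt hr)]

end AuxBallDiff

noncomputable section Aux2

lemma nontrivial_E {n : ℕ} (hn : 1 ≤ n) : Nontrivial (EuclideanSpace ℂ (Fin n)) := by
  refine ⟨⟨EuclideanSpace.single (⟨0, by omega⟩ : Fin n) (1:ℂ), 0, ?_⟩⟩
  intro h
  have h2 : ‖EuclideanSpace.single (⟨0, by omega⟩ : Fin n) (1:ℂ)‖ = 0 := by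
    rw [h, norm_zero]
  rw [EuclideanSpace.norm_single] at h2
  simp at h2

lemma notCompactBall {n : ℕ} (hn : 1 ≤ n) :
    ¬ IsCompact (ball (0 : EuclideanSpace ℂ (Fin n)) 1) := by
  haveI := nontrivial_E hn
  intro h
  have hcl : closure (ball (0 : EuclideanSpace ℂ (Fin n)) 1)
      = ball (0 : EuclideanSpace ℂ (Fin n)) 1 := h.isClosed.closure_eq
  rw [closure_ball (0 : EuclideanSpace ℂ (Fin n)) one_ne_zero] at hcl
  set e : EuclideanSpace ℂ (Fin n) := EuclideanSpace.single (⟨0, by omega⟩ : Fin n) (1:ℂ) with he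
  have hne : ‖e‖ = 1 := by rw [he, EuclideanSpace.norm_single]; simp
  have h1 : e ∈ closedBall (0 : EuclideanSpace ℂ (Fin n)) 1 := by
    rw [mem_closedBall, dist_zero_right, hne]
  rw [hcl, mem_ball, dist_zero_right, hne] at h1
  exact lt_irrefl 1 h1

lemma exists_sphere_point {n : ℕ} {c : EuclideanSpace ℂ (Fin n)} {r : ℝ}
    {p₁ z₀ : EuclideanSpace ℂ (Fin n)}
    (hp₁ : p₁ ∈ ball c r) (hp₁b : p₁ ∈ ball (0 : EuclideanSpace ℂ (Fin n)) 1)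
    (hz₀b : z₀ ∈ ball (0 : EuclideanSpace ℂ (Fin n)) 1) (hz₀ : z₀ ∉ closedBall c r) :
    ∃ ζ, ζ ∈ sphere c r ∩ ball (0 : EuclideanSpace ℂ (Fin n)) 1 := by
  set γ : ℝ → EuclideanSpace ℂ (Fin n) := fun t => (1 - t) • p₁ + t • z₀ with hγ
  have hcont : Continuous γ := by fun_prop
  have hφ : ContinuousOn (fun t => dist (γ t) c) (Set.Icc (0:ℝ) 1) :=
    (hcont.dist continuous_const).continuousOn
  have h0 : dist (γ 0) c < r := by
    have : γ 0 = p₁ := by rw [hγ]; simp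
    rw [this]; exact mem_ball.1 hp₁
  have h1 : r < dist (γ 1) c := by
    have : γ 1 = z₀ := by rw [hγ]; simp
    rw [this]
    exact not_le.1 (fun hc => hz₀ (mem_closedBall.2 hc))
  obtain ⟨t, ht, hφt⟩ := intermediate_value_Icc (by norm_num : (0:ℝ) ≤ 1) hφ
    ⟨le_of_lt h0, le_of_lt h1⟩
  refine ⟨γ t, ?_, ?_⟩
  · rw [mem_sphere]; exact hφt
  · exact convex_ball (0 : EuclideanSpace ℂ (Fin n)) 1 hp₁b hz₀b
      (by linarith [ht.2] : (0:ℝ) ≤ 1 - t) ht.1 (by ring)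

lemma part1_main {n N : ℕ}
    {c : EuclideanSpace ℂ (Fin n)} {r : ℝ} (hr : 0 < r)
    {Cc : EuclideanSpace ℂ (Fin N)} {R : ℝ} (hR : 0 < R)
    {P : Fin N → MvPolynomial (Fin n) ℂ} {q : MvPolynomial (Fin n) ℂ}
    (hq : ∀ z : EuclideanSpace ℂ (Fin n), z ∈ ball (0 : EuclideanSpace ℂ (Fin n)) 1 →
        MvPolynomial.eval (fun i => z i) q ≠ 0)
    (hF : ProperOn (ratMap P q) (ball (0 : EuclideanSpace ℂ (Fin n)) 1)
        (ball (0 : EuclideanSpace ℂ (Fin N)) 1))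
    (f : EuclideanSpace ℂ (Fin n) → EuclideanSpace ℂ (Fin N))
    (hfp : ProperOn f (ball (0 : EuclideanSpace ℂ (Fin n)) 1 \ closedBall c r)
          (ball (0 : EuclideanSpace ℂ (Fin N)) 1 \ closedBall Cc R))
    (hext : ∀ z ∈ ball (0 : EuclideanSpace ℂ (Fin n)) 1 \ closedBall c r,
          ratMap P q z = f z) :
    Set.MapsTo (ratMap P q) (sphere c r ∩ ball (0 : EuclideanSpace ℂ (Fin n)) 1)
      (sphere Cc R ∩ ball (0 : EuclideanSpace ℂ (Fin N)) 1) := by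
  intro z hz
  obtain ⟨hzs, hzb⟩ := hz
  set g : ℕ → EuclideanSpace ℂ (Fin n) := fun k => z + ((1:ℝ)/(k+1)) • (z - c) with hg
  have htend : Filter.Tendsto g Filter.atTop (nhds z) := by
    have h1 : Filter.Tendsto (fun k : ℕ => (1:ℝ)/(k+1)) Filter.atTop (nhds 0) :=
      tendsto_one_div_add_atTop_nhds_zero_nat
    have h2 : Filter.Tendsto (fun k : ℕ => ((1:ℝ)/(k+1)) • (z - c)) Filter.atTop
        (nhds ((0:ℝ) • (z - c))) := h1.smul_const (z - c)
    rw [zero_smul] at h2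
    have h3 := (tendsto_const_nhds (x := z) (f := Filter.atTop (α := ℕ))).add h2
    rw [add_zero] at h3
    exact h3
  have hdistg : ∀ k : ℕ, g k ∉ closedBall c r := by
    intro k hk
    have h3 : g k - c = (1 + (1:ℝ)/(k+1)) • (z - c) := by
      rw [hg]; simp only; rw [add_smul, one_smul]; abel
    have hzc : ‖z - c‖ = r := by rw [← dist_eq_norm]; exact mem_sphere.1 hzs
    have h4 : dist (g k) c = (1 + (1:ℝ)/(k+1)) * r := by
      rw [dist_eq_norm, h3, norm_smul, Real.norm_eq_abs, abs_of_pos (by positivity), hzc]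
    rw [mem_closedBall, h4] at hk
    have hk1 : (0:ℝ) < 1/(k+1) := by positivity
    nlinarith
  have hgb : ∀ᶠ k in Filter.atTop, g k ∈ ball (0 : EuclideanSpace ℂ (Fin n)) 1 :=
    htend.eventually (isOpen_ball.eventually_mem hzb)
  have hgS : ∀ᶠ k in Filter.atTop,
      g k ∈ ball (0 : EuclideanSpace ℂ (Fin n)) 1 \ closedBall c r :=
    hgb.mono (fun k hk => ⟨hk, hdistg k⟩)
  have hcont : ContinuousAt (ratMap P q) z := (analyticAt_ratMap P q (hq z hzb)).continuousAt
  have htendF : Filter.Tendsto (fun k => ratMap P q (g k)) Filter.atTop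
      (nhds (ratMap P q z)) := (hcont.tendsto).comp htend
  have hFzb : ratMap P q z ∈ ball (0 : EuclideanSpace ℂ (Fin N)) 1 := hF.1 hzb
  have hgT : ∀ᶠ k in Filter.atTop, ratMap P q (g k) ∈
      ball (0 : EuclideanSpace ℂ (Fin N)) 1 \ closedBall Cc R := by
    apply hgS.mono
    intro k hk
    rw [hext _ hk]
    exact hfp.1 hk
  have hge : R ≤ dist (ratMap P q z) Cc := by
    apply ge_of_tendsto (htendF.dist (tendsto_const_nhds (x := Cc)))
    apply hgT.mono
    intro k hk
    have h5 := hk.2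
    rw [mem_closedBall] at h5
    exact le_of_lt (not_le.1 h5)
  by_cases heq : dist (ratMap P q z) Cc = R
  · exact ⟨mem_sphere.2 heq, hFzb⟩
  · exfalso
    have hlt : R < dist (ratMap P q z) Cc := lt_of_le_of_ne hge (Ne.symm heq)
    have hFn : ‖ratMap P q z‖ < 1 := mem_ball_zero_iff.1 hFzb
    set δ : ℝ := min ((1 - ‖ratMap P q z‖)/2) ((dist (ratMap P q z) Cc - R)/2) with hδ
    have hδ0 : 0 < δ := lt_min (by linarith) (by linarith)
    have hδ1 : δ ≤ (1 - ‖ratMap P q z‖)/2 := min_le_left _ _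
    have hδ2 : δ ≤ (dist (ratMap P q z) Cc - R)/2 := min_le_right _ _
    set K : Set (EuclideanSpace ℂ (Fin N)) := closedBall (ratMap P q z) δ with hK
    have hKsub : K ⊆ ball (0 : EuclideanSpace ℂ (Fin N)) 1 \ closedBall Cc R := by
      intro w hw
      rw [hK, mem_closedBall] at hw
      constructor
      · rw [mem_ball_zero_iff]
        have htri : ‖w‖ ≤ ‖ratMap P q z‖ + ‖w - ratMap P q z‖ := by
          calc ‖w‖ = ‖ratMap P q z + (w - ratMap P q z)‖ := by congr 1; abel
            _ ≤ _ := norm_add_le _ _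
        have hwd : ‖w - ratMap P q z‖ = dist w (ratMap P q z) := (dist_eq_norm _ _).symm
        linarith [hwd ▸ htri]
      · intro hwc
        rw [mem_closedBall] at hwc
        have htri : dist (ratMap P q z) Cc ≤ dist (ratMap P q z) w + dist w Cc :=
          dist_triangle _ _ _
        have h6 : dist (ratMap P q z) w ≤ δ := by rw [dist_comm]; exact hw
        linarith
    have hKc : IsCompact K := isCompact_closedBall _ _
    have hcomp := hfp.2 K hKsub hKc
    have hevd : ∀ᶠ k in Filter.atTop, ratMap P q (g k) ∈ K := by
      apply htendF.eventually_mem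
      exact Filter.mem_of_superset (ball_mem_nhds (ratMap P q z) hδ0) ball_subset_closedBall
    have hevK : ∀ᶠ k in Filter.atTop,
        g k ∈ (ball (0 : EuclideanSpace ℂ (Fin n)) 1 \ closedBall c r) ∩ f ⁻¹' K := by
      filter_upwards [hgS, hevd] with k hk1 hk2
      exact ⟨hk1, by rw [Set.mem_preimage, ← hext _ hk1]; exact hk2⟩
    have hzmem := hcomp.isClosed.mem_of_tendsto htend hevK
    exact hzmem.1.2 (mem_closedBall.2 (le_of_eq (mem_sphere.1 hzs)))

lemma stepA_lemma {n N : ℕ} {c : EuclideanSpace ℂ (Fin n)} {r : ℝ} (hr : 0 < r)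
    {Cc : EuclideanSpace ℂ (Fin N)} {R : ℝ} (hR0 : 0 ≤ R)
    {P : Fin N → MvPolynomial (Fin n) ℂ} {q : MvPolynomial (Fin n) ℂ}
    (hQs : ∀ z ∈ sphere c r, MvPolynomial.eval (fun i => (z : EuclideanSpace ℂ (Fin n)) i) q ≠ 0)
    (hsph : Set.MapsTo (ratMap P q) (sphere c r ∩ ball (0 : EuclideanSpace ℂ (Fin n)) 1)
        (sphere Cc R ∩ ball (0 : EuclideanSpace ℂ (Fin N)) 1))
    {ζ' : EuclideanSpace ℂ (Fin n)}
    (hζ' : ζ' ∈ sphere c r ∩ ball (0 : EuclideanSpace ℂ (Fin n)) 1) :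
    ∀ ζ ∈ sphere c r, ‖ratMap P q ζ - Cc‖ = R := by
  intro ζ hζ
  by_cases hne : ζ = ζ'
  · rw [hne, ← mem_sphere_iff_norm]
    exact (hsph hζ').1
  · obtain ⟨p, v, lh, hlh0, hζp, hζ'p, hlheq, hcircle⟩ := chord_circle hr hζ hζ'.1 hne
    have hρ : 0 < ‖lh‖ := norm_pos_iff.2 hlh0
    have hopen : IsOpen {t : ℂ | p + t • v ∈ ball (0 : EuclideanSpace ℂ (Fin n)) 1} := by
      have hcont : Continuous (fun t : ℂ => p + t • v) := by fun_prop
      exact isOpen_ball.preimage hcont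
    have hinf : {t : ℂ | ‖t‖ = ‖lh‖ ∧ (bpoly q p v).eval t ≠ 0 ∧
        ‖ratMap P q (p + t • v) - Cc‖ = R}.Infinite := by
      have hsub : {t : ℂ | ‖t‖ = ‖lh‖ ∧
            t ∈ {t : ℂ | p + t • v ∈ ball (0 : EuclideanSpace ℂ (Fin n)) 1}}
          ⊆ {t : ℂ | ‖t‖ = ‖lh‖ ∧ (bpoly q p v).eval t ≠ 0 ∧
            ‖ratMap P q (p + t • v) - Cc‖ = R} := by
        rintro t ⟨ht, htb⟩
        have hts : p + t • v ∈ sphere c r := hcircle t ht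
        refine ⟨ht, ?_, ?_⟩
        · rw [bpoly_eval]; exact hQs _ hts
        · rw [← mem_sphere_iff_norm]
          exact (hsph ⟨hts, htb⟩).1
      apply Set.Infinite.mono hsub
      apply infinite_circle_inter hρ hopen hlheq
      show p + (lh + 1) • v ∈ ball (0 : EuclideanSpace ℂ (Fin n)) 1
      rw [← hζ'p]
      exact hζ'.2
    have hb : (bpoly q p v).eval lh ≠ 0 := by
      rw [bpoly_eval, ← hζp]
      exact hQs _ hζ
    have h := circle_eq P q Cc p v hρ hR0 hinf rfl hb
    rwa [← hζp] at h

lemma part2_cpt {n N : ℕ} {c : EuclideanSpace ℂ (Fin n)} {r : ℝ}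
    {Cc : EuclideanSpace ℂ (Fin N)} {R : ℝ}
    {P : Fin N → MvPolynomial (Fin n) ℂ} {q : MvPolynomial (Fin n) ℂ}
    (hF : ProperOn (ratMap P q) (ball (0 : EuclideanSpace ℂ (Fin n)) 1)
        (ball (0 : EuclideanSpace ℂ (Fin N)) 1))
    (hsph : Set.MapsTo (ratMap P q) (sphere c r ∩ ball (0 : EuclideanSpace ℂ (Fin n)) 1)
        (sphere Cc R ∩ ball (0 : EuclideanSpace ℂ (Fin N)) 1))
    (K : Set (EuclideanSpace ℂ (Fin N)))
    (hKT : K ⊆ ball (0 : EuclideanSpace ℂ (Fin N)) 1 \ closedBall Cc R)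
    (hKc : IsCompact K) :
    IsCompact ((ball (0 : EuclideanSpace ℂ (Fin n)) 1 \ closedBall c r)
      ∩ ratMap P q ⁻¹' K) := by
  have hM : IsCompact (ball (0 : EuclideanSpace ℂ (Fin n)) 1 ∩ ratMap P q ⁻¹' K) :=
    hF.2 K (fun x hx => (hKT hx).1) hKc
  have hsub : (ball (0 : EuclideanSpace ℂ (Fin n)) 1 \ closedBall c r) ∩ ratMap P q ⁻¹' K
      ⊆ ball (0 : EuclideanSpace ℂ (Fin n)) 1 ∩ ratMap P q ⁻¹' K :=
    fun x hx => ⟨hx.1.1, hx.2⟩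
  have hclosed : IsClosed ((ball (0 : EuclideanSpace ℂ (Fin n)) 1 \ closedBall c r)
      ∩ ratMap P q ⁻¹' K) := by
    apply isClosed_of_closure_subset
    intro x hx
    have hx1 : x ∈ ball (0 : EuclideanSpace ℂ (Fin n)) 1 ∩ ratMap P q ⁻¹' K := by
      rw [← hM.isClosed.closure_eq]
      exact closure_mono hsub hx
    have hx2 : x ∈ closure ((closedBall c r)ᶜ) := by
      apply closure_mono ?_ hx
      intro y hy
      exact hy.1.2
    have hx3 : r ≤ dist x c := by
      have hcl : closure ((closedBall c r)ᶜ) ⊆ {y : EuclideanSpace ℂ (Fin n) | r ≤ dist y c} := by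
        apply closure_minimal
        · intro y hy
          simp only [Set.mem_compl_iff, mem_closedBall, not_le] at hy
          exact le_of_lt hy
        · exact isClosed_le continuous_const (continuous_id.dist continuous_const)
      exact hcl hx2
    rcases eq_or_lt_of_le hx3 with heq | hlt
    · exfalso
      have hxs : x ∈ sphere c r := mem_sphere.2 heq.symm
      have hFx := hsph ⟨hxs, hx1.1⟩
      exact (hKT hx1.2).2 (sphere_subset_closedBall hFx.1)
    · exact ⟨⟨hx1.1, fun hcb => absurd (mem_closedBall.1 hcb) (not_le.2 hlt)⟩, hx1.2⟩
  exact IsCompact.of_isClosed_subset hM hclosed hsub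

lemma stepII_lemma {n N : ℕ} (hn : 1 ≤ n) {c : EuclideanSpace ℂ (Fin n)} {r : ℝ} (hr : 0 < r)
    {Cc : EuclideanSpace ℂ (Fin N)} {R : ℝ}
    {P : Fin N → MvPolynomial (Fin n) ℂ} {q : MvPolynomial (Fin n) ℂ}
    (hint₁ : (ball c r ∩ ball (0 : EuclideanSpace ℂ (Fin n)) 1).Nonempty)
    (hq : ∀ z : EuclideanSpace ℂ (Fin n), z ∈ ball (0 : EuclideanSpace ℂ (Fin n)) 1 →
        MvPolynomial.eval (fun i => z i) q ≠ 0)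
    (hF : ProperOn (ratMap P q) (ball (0 : EuclideanSpace ℂ (Fin n)) 1)
        (ball (0 : EuclideanSpace ℂ (Fin N)) 1))
    {U : Set (EuclideanSpace ℂ (Fin n))} (hUo : IsOpen U) (hUc : closedBall c r ⊆ U)
    (hUq : ∀ z ∈ U, MvPolynomial.eval (fun i => (z : EuclideanSpace ℂ (Fin n)) i) q ≠ 0)
    (hA : ∀ ζ ∈ sphere c r, ‖ratMap P q ζ - Cc‖ = R) :
    ∀ z ∈ ball c r, ‖ratMap P q z - Cc‖ < R := by
  haveI := nontrivial_E hn
  have hdiffU : DifferentiableOn ℂ (ratMap P q) U := fun w hw =>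
    ((analyticAt_ratMap P q (hUq w hw)).differentiableAt).differentiableWithinAt
  have hdiff : DifferentiableOn ℂ (fun w => ratMap P q w - Cc) (ball c r) :=
    (hdiffU.mono (subset_trans ball_subset_closedBall hUc)).sub_const Cc
  have hcont : ContinuousOn (fun w => ratMap P q w - Cc) (closure (ball c r)) := by
    rw [closure_ball c (ne_of_gt hr)]
    exact ((hdiffU.continuousOn).mono hUc).sub continuousOn_const
  have hdc : DiffContOnCl ℂ (fun w => ratMap P q w - Cc) (ball c r) := ⟨hdiff, hcont⟩
  have hle : ∀ w ∈ closedBall c r, ‖ratMap P q w - Cc‖ ≤ R := by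
    intro w hw
    apply Complex.norm_le_of_forall_mem_frontier_norm_le isBounded_ball hdc
    · intro x hx
      rw [frontier_ball c (ne_of_gt hr)] at hx
      exact le_of_eq (hA x hx)
    · rwa [closure_ball c (ne_of_gt hr)]
  intro z hz
  rcases lt_or_eq_of_le (hle z (ball_subset_closedBall hz)) with h | h
  · exact h
  · exfalso
    have hmax : IsMaxOn (norm ∘ (fun w => ratMap P q w - Cc)) (ball c r) z := by
      intro y hy
      show ‖ratMap P q y - Cc‖ ≤ ‖ratMap P q z - Cc‖
      rw [h]
      exact hle y (ball_subset_closedBall hy)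
    have hconst := Complex.eqOn_of_isPreconnected_of_isMaxOn_norm
      (convex_ball c r).isPreconnected isOpen_ball hdiff hz hmax
    have hFconst : Set.EqOn (ratMap P q) (fun _ => ratMap P q z) (ball c r) := by
      intro y hy
      have h7 := hconst hy
      simp only [Function.const_apply] at h7
      exact sub_left_inj.1 h7
    obtain ⟨x₀, hx₀r, hx₀b⟩ := hint₁
    have hWpre : IsPreconnected
        (ball (0 : EuclideanSpace ℂ (Fin n)) 1 ∪ ball c r) :=
      IsPreconnected.union x₀ hx₀b hx₀r (convex_ball _ _).isPreconnected
        (convex_ball _ _).isPreconnected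
    have hFan : AnalyticOnNhd ℂ (ratMap P q)
        (ball (0 : EuclideanSpace ℂ (Fin n)) 1 ∪ ball c r) := by
      intro w hw
      rcases hw with hw | hw
      · exact analyticAt_ratMap P q (hq w hw)
      · exact analyticAt_ratMap P q (hUq w (hUc (ball_subset_closedBall hw)))
    have hgan : AnalyticOnNhd ℂ (fun _ : EuclideanSpace ℂ (Fin n) => ratMap P q z)
        (ball (0 : EuclideanSpace ℂ (Fin n)) 1 ∪ ball c r) :=
      fun w _ => analyticAt_const
    have hev : ratMap P q =ᶠ[nhds z] (fun _ => ratMap P q z) :=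
      Filter.eventuallyEq_of_mem (isOpen_ball.mem_nhds hz) hFconst
    have hEq := hFan.eqOn_of_preconnected_of_eventuallyEq hgan hWpre (Or.inr hz) hev
    have hFx₀ : ratMap P q x₀ ∈ ball (0 : EuclideanSpace ℂ (Fin N)) 1 := hF.1 hx₀b
    have hFzb : ratMap P q z ∈ ball (0 : EuclideanSpace ℂ (Fin N)) 1 := by
      have h8 := hEq (Or.inl hx₀b)
      rwa [h8] at hFx₀
    have hcompact := hF.2 {ratMap P q z} (Set.singleton_subset_iff.2 hFzb) isCompact_singleton
    have hball_eq : ball (0 : EuclideanSpace ℂ (Fin n)) 1 ∩ (ratMap P q ⁻¹' {ratMap P q z})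
        = ball (0 : EuclideanSpace ℂ (Fin n)) 1 := by
      ext w
      constructor
      · exact fun hw => hw.1
      · intro hw
        exact ⟨hw, by simp [Set.mem_preimage, hEq (Or.inl hw)]⟩
    rw [hball_eq] at hcompact
    exact notCompactBall hn hcompact

end Aux2

/-- (1) if a rational proper map `F = p/q` of the unit balls
extends a proper holomorphic map of the ball differences, then `F` takes
`(∂B_r(c)) ∩ 𝔹ₙ` into `(∂B_R(C)) ∩ 𝔹_N`; (2) conversely, a rational proper
map of the unit balls, holomorphic on a neighborhood of `closure(B_r(c))`,
taking `(∂B_r(c)) ∩ 𝔹ₙ` into `(∂B_R(C)) ∩ 𝔹_N`, restricts to a proper map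
of the ball differences. -/
theorem ball_differences {n N : ℕ} (hn : 2 ≤ n)
    (c : EuclideanSpace ℂ (Fin n)) (r : ℝ) (hr : 0 < r)
    (Cc : EuclideanSpace ℂ (Fin N)) (R : ℝ) (hR : 0 < R)
    (hint₁ : (ball c r ∩ ball (0 : EuclideanSpace ℂ (Fin n)) 1).Nonempty)
    (hint₂ : (ball Cc R ∩ ball (0 : EuclideanSpace ℂ (Fin N)) 1).Nonempty)
    (P : Fin N → MvPolynomial (Fin n) ℂ) (q : MvPolynomial (Fin n) ℂ) :
    -- Part 1:
    ((∀ z : EuclideanSpace ℂ (Fin n), z ∈ ball (0 : EuclideanSpace ℂ (Fin n)) 1 →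
        MvPolynomial.eval (fun i => z i) q ≠ 0) →
      ProperOn (ratMap P q) (ball (0 : EuclideanSpace ℂ (Fin n)) 1)
        (ball (0 : EuclideanSpace ℂ (Fin N)) 1) →
      (∀ f : EuclideanSpace ℂ (Fin n) → EuclideanSpace ℂ (Fin N),
        DifferentiableOn ℂ f
          (ball (0 : EuclideanSpace ℂ (Fin n)) 1 \ closedBall c r) →
        ProperOn f (ball (0 : EuclideanSpace ℂ (Fin n)) 1 \ closedBall c r)
          (ball (0 : EuclideanSpace ℂ (Fin N)) 1 \ closedBall Cc R) →
        (∀ z ∈ ball (0 : EuclideanSpace ℂ (Fin n)) 1 \ closedBall c r,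
          ratMap P q z = f z) →
        Set.MapsTo (ratMap P q)
          (sphere c r ∩ ball (0 : EuclideanSpace ℂ (Fin n)) 1)
          (sphere Cc R ∩ ball (0 : EuclideanSpace ℂ (Fin N)) 1))) ∧
    -- Part 2:
    ((∀ z : EuclideanSpace ℂ (Fin n), z ∈ ball (0 : EuclideanSpace ℂ (Fin n)) 1 →
        MvPolynomial.eval (fun i => z i) q ≠ 0) →
      ProperOn (ratMap P q) (ball (0 : EuclideanSpace ℂ (Fin n)) 1)
        (ball (0 : EuclideanSpace ℂ (Fin N)) 1) →
      (∃ U : Set (EuclideanSpace ℂ (Fin n)), IsOpen U ∧ closedBall c r ⊆ U ∧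
        ∀ z ∈ U, MvPolynomial.eval (fun i => z i) q ≠ 0) →
      Set.MapsTo (ratMap P q)
        (sphere c r ∩ ball (0 : EuclideanSpace ℂ (Fin n)) 1)
        (sphere Cc R ∩ ball (0 : EuclideanSpace ℂ (Fin N)) 1) →
      ProperOn (ratMap P q)
        (ball (0 : EuclideanSpace ℂ (Fin n)) 1 \ closedBall c r)
        (ball (0 : EuclideanSpace ℂ (Fin N)) 1 \ closedBall Cc R)) := by
  constructor
  · intro hq hF f hfd hfp hext
    exact part1_main hr hR hq hF f hfp hext
  · intro hq hF hU hsph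
    obtain ⟨U, hUo, hUc, hUq⟩ := hU
    have hQs : ∀ z ∈ sphere c r, MvPolynomial.eval (fun i => (z : EuclideanSpace ℂ (Fin n)) i) q ≠ 0 :=
      fun z hz => hUq z (hUc (sphere_subset_closedBall hz))
    constructor
    · -- MapsTo
      intro z₀ hz₀
      obtain ⟨hz₀b, hz₀nc⟩ := hz₀
      obtain ⟨p₁, hp₁r, hp₁b⟩ := hint₁
      obtain ⟨ζ', hζ'⟩ := exists_sphere_point hp₁r hp₁b hz₀b hz₀nc
      have hA := stepA_lemma hr (le_of_lt hR) hQs hsph hζ'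
      have hII := stepII_lemma (by omega : 1 ≤ n) hr ⟨p₁, hp₁r, hp₁b⟩ hq hF hUo hUc hUq hA
      set v : EuclideanSpace ℂ (Fin n) := z₀ - c with hv
      have hvn : r < ‖v‖ := by
        rw [hv, ← dist_eq_norm]
        exact not_le.1 (fun h => hz₀nc (mem_closedBall.2 h))
      have hv0 : (0:ℝ) < ‖v‖ := lt_trans hr hvn
      set ρ : ℝ := r / ‖v‖ with hρdef
      have hρ0 : 0 < ρ := div_pos hr hv0
      have hρ1 : ρ < 1 := (div_lt_one hv0).2 hvn
      have hsphere : ∀ t : ℂ, ‖t‖ = ρ → c + t • v ∈ sphere c r := by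
        intro t ht
        rw [mem_sphere_iff_norm, add_sub_cancel_left, norm_smul, ht, hρdef]
        field_simp
      have hinf : {t : ℂ | ‖t‖ = ρ ∧ (bpoly q c v).eval t ≠ 0 ∧
          ‖ratMap P q (c + t • v) - Cc‖ = R}.Infinite := by
        have hsub : {t : ℂ | ‖t‖ = ρ ∧ t ∈ (Set.univ : Set ℂ)}
            ⊆ {t : ℂ | ‖t‖ = ρ ∧ (bpoly q c v).eval t ≠ 0 ∧
              ‖ratMap P q (c + t • v) - Cc‖ = R} := by
          rintro t ⟨ht, -⟩
          have hts := hsphere t ht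
          exact ⟨ht, by rw [bpoly_eval]; exact hQs _ hts, hA _ hts⟩
        apply Set.Infinite.mono hsub
        apply infinite_circle_inter hρ0 isOpen_univ (l := ((ρ : ℝ) : ℂ)) ?_ (Set.mem_univ _)
        rw [Complex.norm_real, Real.norm_eq_abs, abs_of_pos hρ0]
      have hμeq : (((ρ : ℝ) : ℂ))^2 = ((ρ : ℝ) : ℂ)^2 / (starRingEnd ℂ) 1 := by simp
      have hbt : (bpoly q c v).eval 1 ≠ 0 := by
        rw [bpoly_eval]
        have h1v : c + (1:ℂ) • v = z₀ := by rw [one_smul, hv]; abel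
        rw [h1v]
        exact hq z₀ hz₀b
      have hμball : c + (((ρ : ℝ) : ℂ))^2 • v ∈ ball c r := by
        rw [mem_ball_iff_norm, add_sub_cancel_left, norm_smul]
        have hnμ : ‖(((ρ : ℝ) : ℂ))^2‖ = ρ^2 := by
          rw [norm_pow, Complex.norm_real, Real.norm_eq_abs, abs_of_pos hρ0]
        rw [hnμ]
        have : ρ^2 * ‖v‖ = ρ * r := by
          rw [hρdef]; field_simp
        rw [this]
        nlinarith
      have hbμ : (bpoly q c v).eval ((((ρ : ℝ) : ℂ))^2) ≠ 0 := by
        rw [bpoly_eval]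
        exact hUq _ (hUc (ball_subset_closedBall hμball))
      have hlt := hII _ hμball
      have hfinal := circle_lt P q Cc c v hρ0 hR hinf one_ne_zero hμeq hbt hbμ hlt
      have h1v : c + (1:ℂ) • v = z₀ := by rw [one_smul, hv]; abel
      rw [h1v] at hfinal
      constructor
      · exact hF.1 hz₀b
      · intro hFcb
        rw [mem_closedBall, dist_eq_norm] at hFcb
        linarith
    · intro K hKT hKc
      exact part2_cpt hF hsph K hKT hKc
end
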